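/- arXiv:2010.05255 — 6 statements merged into one kernel-verified Lean document; each statement's English description precedes it below -/
import Mathlib

section
/- Let $X$ be a Banach lattice and let $I$ be an ideal of the norm dual $X^*$. If $\{f_n\}$ is a disjoint sequence in $X$ such that $\langle g, f_n\rangle \to 0$ for every $g \in I$, then $\langle g, |f_n|\rangle \to 0$ for every $g \in I$. -/
/-!
Fix `g ∈ I` and write `|g| x = absApp g x` for `x ≥ 0`; by the Riesz decomposition property it is
additive and positively homogeneous on the positive cone. Disjointness of the `f n` gives
`∑ cₙ⁺ • (f n)⁺ ≤ (∑ cₙ • f n)⁺`, so the functional `∑ cₙ • f n ↦ ∑ cₙ * |g| (f n)⁺` on the span of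
the `f n` is well defined and dominated by the sublinear functional `p x = |g| x⁺`. A Hahn–Banach
extension `h ≤ p` is positive with `h ≤ |g|`, hence lies in the ideal `I`, and
`h (f n) = |g| (f n)⁺`; so `|g| (f n)⁺ → 0`. Applied to `-f n` this gives `|g| (f n)⁻ → 0`, and
`|g |f n|| ≤ |g| (f n)⁺ + |g| (f n)⁻`.
-/

open Filter Topology

variable {X : Type*} [NormedAddCommGroup X] [Lattice X] [HasSolidNorm X] [IsOrderedAddMonoid X] [NormedSpace ℝ X] [CompleteSpace X]

/-- The value at `x ≥ 0` of the absolute value `|g|` of a continuous linear functional `g`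
on a Banach lattice, given by the Riesz–Kantorovich formula `|g|(x) = sup { g y : |y| ≤ x }`. -/
noncomputable def absApp (g : X →L[ℝ] ℝ) (x : X) : ℝ :=
  sSup ((fun y => g y) '' {y : X | |y| ≤ x})

/-- `|h| ≤ |g|` in the dual lattice `X*`. -/
def absLE (h g : X →L[ℝ] ℝ) : Prop :=
  ∀ x : X, 0 ≤ x → absApp h x ≤ absApp g x

section LatticeOrderedGroup

variable {E : Type*} [AddCommGroup E] [Lattice E] [IsOrderedAddMonoid E]

lemma posPart_le_abs (x : E) : x⁺ ≤ |x| :=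
  posPart_add_negPart x ▸ le_add_of_nonneg_right (negPart_nonneg x)

lemma negPart_le_abs (x : E) : x⁻ ≤ |x| :=
  posPart_add_negPart x ▸ le_add_of_nonneg_left (posPart_nonneg x)

lemma inf_add_le_add_inf {a b c : E} (ha : 0 ≤ a) (hb : 0 ≤ b) (hc : 0 ≤ c) :
    a ⊓ (b + c) ≤ a ⊓ b + a ⊓ c := by
  rw [inf_add, add_inf, add_inf]
  refine le_inf (le_inf ?_ ?_) (le_inf ?_ inf_le_right) <;> refine inf_le_left.trans ?_
  exacts [le_add_of_nonneg_left ha, le_add_of_nonneg_right hc, le_add_of_nonneg_left hb]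

lemma inf_add_eq_zero {a b c : E} (hab : a ⊓ b = 0) (hac : a ⊓ c = 0) : a ⊓ (b + c) = 0 := by
  have ha : 0 ≤ a := hab ▸ inf_le_left
  have hb : 0 ≤ b := hab ▸ inf_le_right
  have hc : 0 ≤ c := hac ▸ inf_le_right
  refine le_antisymm ?_ (le_inf ha (add_nonneg hb hc))
  exact (inf_add_le_add_inf ha hb hc).trans_eq (by rw [hab, hac, add_zero])

lemma abs_inf_abs_add_eq_zero {a b c : E} (hab : |a| ⊓ |b| = 0) (hac : |a| ⊓ |c| = 0) :
    |a| ⊓ |b + c| = 0 :=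
  le_antisymm ((inf_le_inf_left _ (abs_add_le b c)).trans (inf_add_eq_zero hab hac).le)
    (le_inf (abs_nonneg a) (abs_nonneg _))

lemma abs_inf_abs_sum_eq_zero {ι : Type*} {a : E} {s : Finset ι} {b : ι → E}
    (h : ∀ i ∈ s, |a| ⊓ |b i| = 0) : |a| ⊓ |∑ i ∈ s, b i| = 0 :=
  Finset.sum_induction b (fun y => |a| ⊓ |y| = 0) (fun _ _ => abs_inf_abs_add_eq_zero)
    (by rw [abs_zero, inf_eq_right.2 (abs_nonneg a)]) h

lemma posPart_sub_of_inf_eq_zero {u v : E} (h : u ⊓ v = 0) : (u - v)⁺ = u := by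
  rw [posPart_def, ← sub_self v, ← sup_sub, ← zero_add (u ⊔ v), ← h, inf_add_sup,
    add_sub_cancel_right]

lemma posPart_add_of_abs_inf_abs_eq_zero {x y : E} (h : |x| ⊓ |y| = 0) :
    (x + y)⁺ = x⁺ + y⁺ := by
  have disj : ∀ {a b : E}, 0 ≤ a → 0 ≤ b → a ≤ |x| → b ≤ |y| → a ⊓ b = 0 :=
    fun ha hb hax hby => le_antisymm (h ▸ inf_le_inf hax hby) (le_inf ha hb)
  have hparts : (x⁺ + y⁺) ⊓ (x⁻ + y⁻) = 0 := by
    rw [inf_comm]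
    refine inf_add_eq_zero ?_ ?_ <;> rw [inf_comm] <;> refine inf_add_eq_zero ?_ ?_
    · exact posPart_inf_negPart_eq_zero x
    · exact disj (posPart_nonneg x) (negPart_nonneg y) (posPart_le_abs x) (negPart_le_abs y)
    · rw [inf_comm]
      exact disj (negPart_nonneg x) (posPart_nonneg y) (negPart_le_abs x) (posPart_le_abs y)
    · exact posPart_inf_negPart_eq_zero y
  rw [← posPart_sub_of_inf_eq_zero hparts, add_sub_add_comm, posPart_sub_negPart,
    posPart_sub_negPart]

lemma posPart_sum_of_pairwise {ι : Type*} (s : Finset ι) {u : ι → E}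
    (hu : Pairwise fun i j => |u i| ⊓ |u j| = 0) : (∑ i ∈ s, u i)⁺ = ∑ i ∈ s, (u i)⁺ := by
  classical
  induction s using Finset.induction_on with
  | empty => simp
  | insert j s hj ih =>
    rw [Finset.sum_insert hj, Finset.sum_insert hj, ← ih]
    exact posPart_add_of_abs_inf_abs_eq_zero
      (abs_inf_abs_sum_eq_zero fun i hi => hu (ne_of_mem_of_not_mem hi hj).symm)

lemma exists_add_eq_of_abs_le_add {u v z : E} (hu : 0 ≤ u) (hv : 0 ≤ v) (hz : |z| ≤ u + v) :
    ∃ z₁ z₂ : E, z = z₁ + z₂ ∧ |z₁| ≤ u ∧ |z₂| ≤ v := by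
  obtain ⟨hz_le, hz_ge⟩ := abs_le'.1 hz
  refine ⟨(z ⊔ -u) ⊓ u, z - (z ⊔ -u) ⊓ u, (add_sub_cancel _ _).symm, ?_, ?_⟩
  · exact abs_le'.2 ⟨inf_le_right, neg_le.1 (le_inf le_sup_right (neg_le_self hu))⟩
  refine abs_le'.2 ⟨?_, ?_⟩
  · rw [sub_inf]
    exact sup_le ((sub_nonpos.2 le_sup_left).trans hv) (sub_le_iff_le_add'.2 hz_le)
  · calc -(z - (z ⊔ -u) ⊓ u) ≤ z ⊔ -u - z := by
          rw [neg_sub]; exact sub_le_sub_right inf_le_left z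
      _ = (-z - u) ⊔ 0 := by rw [sup_sub, sub_self, sup_comm, neg_sub_comm]
      _ ≤ v := sup_le (sub_le_iff_le_add'.2 hz_ge) hv

lemma nonneg_of_two_pow_nsmul_nonneg {a : E} : ∀ k : ℕ, 0 ≤ 2 ^ k • a → 0 ≤ a
  | 0, h => by simpa using h
  | k + 1, h => nonneg_of_two_pow_nsmul_nonneg k <|
      nsmul_two_semiclosed (by rwa [← mul_nsmul, ← pow_succ])

end LatticeOrderedGroup

section LatticeOrderedModule

variable {𝕜 E : Type*} [Field 𝕜] [LinearOrder 𝕜] [IsStrictOrderedRing 𝕜]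
  [AddCommGroup E] [Lattice E] [Module 𝕜 E] [PosSMulMono 𝕜 E]

lemma smul_sup_of_nonneg {t : 𝕜} (ht : 0 ≤ t) (a b : E) : t • (a ⊔ b) = t • a ⊔ t • b := by
  rcases ht.eq_or_lt with rfl | ht
  · simp
  · exact (OrderIso.smulRight ht).map_sup a b

lemma smul_inf_of_nonneg {t : 𝕜} (ht : 0 ≤ t) (a b : E) : t • (a ⊓ b) = t • a ⊓ t • b := by
  rcases ht.eq_or_lt with rfl | ht
  · simp
  · exact (OrderIso.smulRight ht).map_inf a b

lemma posPart_smul_of_nonneg {t : 𝕜} (ht : 0 ≤ t) (a : E) : (t • a)⁺ = t • a⁺ := by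
  rw [posPart_def, posPart_def, smul_sup_of_nonneg ht, smul_zero]

lemma abs_smul' (t : 𝕜) (a : E) : |t • a| = |t| • |a| := by
  rcases le_total 0 t with ht | ht
  · rw [abs_of_nonneg ht, abs, abs, smul_sup_of_nonneg ht, smul_neg]
  · rw [abs_of_nonpos ht, ← abs_neg, ← neg_smul, abs, abs, smul_sup_of_nonneg (neg_nonneg.2 ht),
      smul_neg]

lemma posPart_smul_posPart_le (t : 𝕜) (a : E) : t⁺ • a⁺ ≤ (t • a)⁺ := by
  rcases le_total 0 t with ht | ht
  · rw [posPart_of_nonneg ht, posPart_smul_of_nonneg ht]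
  · rw [posPart_eq_zero.2 ht, zero_smul]
    exact posPart_nonneg _

variable [IsOrderedAddMonoid E]

lemma abs_smul_inf_abs_smul_eq_zero {a b : E} (h : |a| ⊓ |b| = 0) (s t : 𝕜) :
    |s • a| ⊓ |t • b| = 0 := by
  rw [abs_smul', abs_smul']
  refine le_antisymm ?_ (le_inf (smul_nonneg (abs_nonneg s) (abs_nonneg a))
    (smul_nonneg (abs_nonneg t) (abs_nonneg b)))
  calc |s| • |a| ⊓ |t| • |b| ≤ max |s| |t| • |a| ⊓ max |s| |t| • |b| :=
        inf_le_inf (smul_le_smul_of_nonneg_right (le_max_left _ _) (abs_nonneg a))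
          (smul_le_smul_of_nonneg_right (le_max_right _ _) (abs_nonneg b))
    _ = 0 := by rw [← smul_inf_of_nonneg ((abs_nonneg s).trans (le_max_left _ _)), h, smul_zero]

end LatticeOrderedModule

section ClosedCone

variable {E : Type*} [AddCommGroup E] [Lattice E] [IsOrderedAddMonoid E] [Module ℝ E]
  [TopologicalSpace E] [ContinuousSMul ℝ E] [ClosedIciTopology E]

/-- The order is not assumed compatible with scalars: `0 ≤ t • x` holds for dyadic `t ≥ 0` by
repeated halving (`nsmul_two_semiclosed`), hence for all `t ≥ 0` because the positive cone is
closed. -/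
instance posSMulMono_of_closedIciTopology : PosSMulMono ℝ E := by
  refine PosSMulMono.of_smul_nonneg fun t ht x hx => ?_
  have dyadic : ∀ m k : ℕ, 0 ≤ ((m : ℝ) / 2 ^ k) • x := fun m k =>
    nonneg_of_two_pow_nsmul_nonneg k <| by
      rw [← Nat.cast_smul_eq_nsmul ℝ, smul_smul, Nat.cast_pow, Nat.cast_ofNat,
        mul_div_cancel₀ _ (by positivity), Nat.cast_smul_eq_nsmul]
      exact nsmul_nonneg hx m
  have approx : Tendsto (fun k : ℕ => (⌊t * 2 ^ k⌋₊ : ℝ) / 2 ^ k) atTop (𝓝 t) :=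
    (tendsto_nat_floor_mul_div_atTop ht).comp (tendsto_pow_atTop_atTop_of_one_lt one_lt_two)
  exact isClosed_Ici.mem_of_tendsto (approx.smul_const x) (Eventually.of_forall fun k => dyadic _ k)

end ClosedCone

lemma exists_extension_along_of_le_sublinear {F E : Type*} [AddCommGroup F] [Module ℝ F]
    [AddCommGroup E] [Module ℝ E] (L : F →ₗ[ℝ] E) (A : F →ₗ[ℝ] ℝ) (N : E → ℝ)
    (N_hom : ∀ c : ℝ, 0 < c → ∀ x, N (c • x) = c * N x) (N_add : ∀ x y, N (x + y) ≤ N x + N y)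
    (hAN : ∀ c, A c ≤ N (L c)) :
    ∃ h : E →ₗ[ℝ] ℝ, (∀ c, h (L c) = A c) ∧ ∀ x, h x ≤ N x := by
  have N_zero : N 0 = 0 := by
    have := N_hom 2 two_pos 0
    rw [smul_zero] at this
    linarith
  have hker : L.ker ≤ A.ker := fun c hc => by
    have h₁ := hAN c
    have h₂ := hAN (-c)
    rw [LinearMap.mem_ker.1 hc, N_zero] at h₁
    rw [map_neg, map_neg, LinearMap.mem_ker.1 hc, neg_zero, N_zero] at h₂
    exact LinearMap.mem_ker.2 (by linarith)
  let A' : LinearMap.range L →ₗ[ℝ] ℝ := L.ker.liftQ A hker ∘ₗ L.quotKerEquivRange.symm.toLinearMap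
  have hA' : ∀ c, A' ⟨L c, LinearMap.mem_range_self L c⟩ = A c := fun c => by
    simp [A', LinearMap.quotKerEquivRange_symm_apply_image]
  obtain ⟨h, h_ext, h_le⟩ := exists_extension_of_le_sublinear ⟨_, A'⟩ N N_hom N_add
    (by rintro ⟨_, c, rfl⟩; exact (hA' c).trans_le (hAN c))
  exact ⟨h, fun c => (h_ext ⟨L c, LinearMap.mem_range_self L c⟩).trans (hA' c), h_le⟩

section AbsApp

variable {V : Type*} [NormedAddCommGroup V] [Lattice V] [IsOrderedAddMonoid V] [NormedSpace ℝ V]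
  (g : V →L[ℝ] ℝ)

lemma absApp_le {x : V} {c : ℝ} (hx : 0 ≤ x) (h : ∀ y, |y| ≤ x → g y ≤ c) : absApp g x ≤ c :=
  csSup_le ⟨0, 0, by rwa [Set.mem_ofPred_eq, abs_zero], map_zero g⟩ (by
    rintro _ ⟨y, hy, rfl⟩
    exact h y hy)

variable [HasSolidNorm V]

lemma apply_le_norm_mul_norm_of_abs_le {x y : V} (hy : |y| ≤ x) : g y ≤ ‖g‖ * ‖x‖ := by
  have hx : |x| = x := abs_of_nonneg ((abs_nonneg y).trans hy)
  calc g y ≤ ‖g y‖ := le_abs_self _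
    _ ≤ ‖g‖ * ‖y‖ := g.le_opNorm y
    _ ≤ ‖g‖ * ‖x‖ := by gcongr; exact norm_le_norm_of_abs_le_abs (hx.symm ▸ hy)

lemma apply_le_absApp {x y : V} (hy : |y| ≤ x) : g y ≤ absApp g x := by
  refine le_csSup ⟨‖g‖ * ‖x‖, ?_⟩ ⟨y, hy, rfl⟩
  rintro _ ⟨z, hz, rfl⟩
  exact apply_le_norm_mul_norm_of_abs_le g hz

lemma absApp_nonneg {x : V} (hx : 0 ≤ x) : 0 ≤ absApp g x :=
  (map_zero g).symm.trans_le (apply_le_absApp g (by rwa [abs_zero]))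

lemma abs_apply_le_absApp {x : V} (hx : 0 ≤ x) : |g x| ≤ absApp g x :=
  abs_le'.2 ⟨apply_le_absApp g (abs_of_nonneg hx).le,
    map_neg g x ▸ apply_le_absApp g (by rw [abs_neg, abs_of_nonneg hx])⟩

lemma absApp_le_norm_mul_norm {x : V} (hx : 0 ≤ x) : absApp g x ≤ ‖g‖ * ‖x‖ :=
  absApp_le g hx fun _ => apply_le_norm_mul_norm_of_abs_le g

lemma absApp_mono {x x' : V} (hx : 0 ≤ x) (hxx' : x ≤ x') : absApp g x ≤ absApp g x' :=
  absApp_le g hx fun _ hy => apply_le_absApp g (hy.trans hxx')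

lemma absApp_add {x y : V} (hx : 0 ≤ x) (hy : 0 ≤ y) :
    absApp g (x + y) = absApp g x + absApp g y := by
  apply le_antisymm
  · refine absApp_le g (add_nonneg hx hy) fun z hz => ?_
    obtain ⟨z₁, z₂, rfl, h₁, h₂⟩ := exists_add_eq_of_abs_le_add hx hy hz
    rw [map_add]
    exact add_le_add (apply_le_absApp g h₁) (apply_le_absApp g h₂)
  · have h₁ : ∀ z₂, |z₂| ≤ y → absApp g x ≤ absApp g (x + y) - g z₂ := fun z₂ h₂ =>
      absApp_le g hx fun z₁ h₁ => le_sub_iff_add_le.2 <| map_add g z₁ z₂ ▸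
        apply_le_absApp g ((abs_add_le z₁ z₂).trans (add_le_add h₁ h₂))
    have h₂ : absApp g y ≤ absApp g (x + y) - absApp g x :=
      absApp_le g hy fun z₂ h₂ => le_sub_comm.1 (h₁ z₂ h₂)
    linarith

lemma absApp_zero : absApp g 0 = 0 := by
  have := absApp_add g le_rfl le_rfl
  rw [add_zero] at this
  linarith

lemma absApp_sum {ι : Type*} (s : Finset ι) {u : ι → V} (hu : ∀ i ∈ s, 0 ≤ u i) :
    absApp g (∑ i ∈ s, u i) = ∑ i ∈ s, absApp g (u i) := by
  classical
  induction s using Finset.induction_on with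
  | empty => simp [absApp_zero]
  | insert j s hj ih =>
    rw [Finset.forall_mem_insert] at hu
    rw [Finset.sum_insert hj, Finset.sum_insert hj, absApp_add g hu.1 (Finset.sum_nonneg hu.2),
      ih hu.2]

lemma absApp_smul {t : ℝ} (ht : 0 ≤ t) {x : V} (hx : 0 ≤ x) :
    absApp g (t • x) = t * absApp g x := by
  rcases ht.eq_or_lt with rfl | ht
  · rw [zero_smul, zero_mul, absApp_zero]
  apply le_antisymm
  · refine absApp_le g (smul_nonneg ht.le hx) fun y hy => ?_
    have hy' : |t⁻¹ • y| ≤ x := by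
      rwa [abs_smul', abs_of_pos (inv_pos.2 ht), inv_smul_le_iff_of_pos ht]
    calc g y = t * g (t⁻¹ • y) := by rw [map_smul, smul_eq_mul, mul_inv_cancel_left₀ ht.ne']
      _ ≤ t * absApp g x := by gcongr; exact apply_le_absApp g hy'
  · rw [← le_div_iff₀' ht]
    refine absApp_le g hx fun y hy => ?_
    rw [le_div_iff₀' ht, ← smul_eq_mul, ← map_smul]
    exact apply_le_absApp g (by
      rw [abs_smul', abs_of_pos ht]; exact smul_le_smul_of_nonneg_left hy ht.le)

lemma absApp_posPart_add_le (x y : V) : absApp g (x + y)⁺ ≤ absApp g x⁺ + absApp g y⁺ :=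
  (absApp_mono g (posPart_nonneg _) (sup_le (add_le_add (le_posPart x) (le_posPart y))
    (add_nonneg (posPart_nonneg x) (posPart_nonneg y)))).trans_eq
    (absApp_add g (posPart_nonneg x) (posPart_nonneg y))

lemma absApp_posPart_smul {t : ℝ} (ht : 0 ≤ t) (x : V) : absApp g (t • x)⁺ = t * absApp g x⁺ := by
  rw [posPart_smul_of_nonneg ht, absApp_smul g ht (posPart_nonneg x)]

lemma sum_mul_absApp_posPart_le {ι : Type*} {f : ι → V}
    (hf : Pairwise fun n m => |f n| ⊓ |f m| = 0) (s : Finset ι) (c : ι → ℝ) :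
    ∑ n ∈ s, c n * absApp g (f n)⁺ ≤ absApp g (∑ n ∈ s, c n • f n)⁺ := by
  have hnonneg : ∀ n, 0 ≤ (c n)⁺ • (f n)⁺ := fun n =>
    smul_nonneg (posPart_nonneg _) (posPart_nonneg _)
  calc ∑ n ∈ s, c n * absApp g (f n)⁺
      ≤ ∑ n ∈ s, (c n)⁺ * absApp g (f n)⁺ := Finset.sum_le_sum fun n _ =>
        mul_le_mul_of_nonneg_right (le_posPart _) (absApp_nonneg g (posPart_nonneg _))
    _ = ∑ n ∈ s, absApp g ((c n)⁺ • (f n)⁺) := Finset.sum_congr rfl fun n _ =>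
        (absApp_smul g (posPart_nonneg _) (posPart_nonneg _)).symm
    _ = absApp g (∑ n ∈ s, (c n)⁺ • (f n)⁺) := (absApp_sum g s fun n _ => hnonneg n).symm
    _ ≤ absApp g (∑ n ∈ s, (c n • f n)⁺) :=
        absApp_mono g (Finset.sum_nonneg fun n _ => hnonneg n)
          (Finset.sum_le_sum fun n _ => posPart_smul_posPart_le _ _)
    _ = absApp g (∑ n ∈ s, c n • f n)⁺ := by
        rw [posPart_sum_of_pairwise s fun n m hnm => abs_smul_inf_abs_smul_eq_zero (hf hnm) _ _]

lemma exists_absLE_apply_eq_absApp_posPart {ι : Type*} {f : ι → V}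
    (hf : Pairwise fun n m => |f n| ⊓ |f m| = 0) :
    ∃ h : V →L[ℝ] ℝ, absLE h g ∧ ∀ n, h (f n) = absApp g (f n)⁺ := by
  obtain ⟨h, h_eq, h_le⟩ := exists_extension_along_of_le_sublinear
    (Finsupp.linearCombination ℝ f) (Finsupp.linearCombination ℝ fun n => absApp g (f n)⁺)
    (fun x => absApp g x⁺) (fun t ht x => absApp_posPart_smul g ht.le x) (absApp_posPart_add_le g)
    (fun c => by
      simpa [Finsupp.linearCombination_apply, Finsupp.sum] using
        sum_mul_absApp_posPart_le g hf c.support c)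
  have h_abs : ∀ x, |h x| ≤ absApp g |x| := fun x => by
    have h_neg := h_le (-x)
    rw [map_neg, posPart_neg] at h_neg
    exact abs_le'.2 ⟨(h_le x).trans (absApp_mono g (posPart_nonneg x) (posPart_le_abs x)),
      h_neg.trans (absApp_mono g (negPart_nonneg x) (negPart_le_abs x))⟩
  refine ⟨h.mkContinuous ‖g‖ fun x => ?_, fun x hx => absApp_le _ hx fun y hy => ?_, fun n => ?_⟩
  · simpa only [Real.norm_eq_abs, norm_abs_eq_norm] using
      (h_abs x).trans (absApp_le_norm_mul_norm g (abs_nonneg x))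
  · exact (h_le y).trans (absApp_mono g (posPart_nonneg y) ((posPart_le_abs y).trans hy))
  · simpa using h_eq (Finsupp.single n 1)

lemma tendsto_absApp_posPart_of_forall_absLE {ι : Type*} {l : Filter ι} {f : ι → V}
    (hf : Pairwise fun n m => |f n| ⊓ |f m| = 0)
    (hnull : ∀ h, absLE h g → Tendsto (fun n => h (f n)) l (𝓝 0)) :
    Tendsto (fun n => absApp g (f n)⁺) l (𝓝 0) := by
  obtain ⟨h, hle, hval⟩ := exists_absLE_apply_eq_absApp_posPart g hf
  simpa only [hval] using hnull h hle

lemma tendsto_absApp_abs_of_forall_absLE {ι : Type*} {l : Filter ι} {f : ι → V}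
    (hf : Pairwise fun n m => |f n| ⊓ |f m| = 0)
    (hnull : ∀ h, absLE h g → Tendsto (fun n => h (f n)) l (𝓝 0)) :
    Tendsto (fun n => absApp g |f n|) l (𝓝 0) := by
  have hpos := tendsto_absApp_posPart_of_forall_absLE g hf hnull
  have hneg : Tendsto (fun n => absApp g (f n)⁻) l (𝓝 0) := by
    simpa only [posPart_neg] using tendsto_absApp_posPart_of_forall_absLE g (f := fun n => -f n)
      (fun n m hnm => by simpa only [abs_neg] using hf hnm)
      (fun h hh => by simpa only [map_neg, neg_zero] using (hnull h hh).neg)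
  simpa only [add_zero] using (hpos.add hneg).congr fun n => by
    rw [← absApp_add g (posPart_nonneg _) (negPart_nonneg _), posPart_add_negPart]

end AbsApp

/-- If `I` is an ideal of `X*` and `{f n}` is a disjoint sequence with `g (f n) → 0` for
every `g ∈ I`, then `g |f n| → 0` for every `g ∈ I`. -/
theorem stmt0 (I : Submodule ℝ (X →L[ℝ] ℝ))
    (hIdeal : ∀ g ∈ I, ∀ h : X →L[ℝ] ℝ, absLE h g → h ∈ I)
    (f : ℕ → X) (hdisj : ∀ n m, n ≠ m → |f n| ⊓ |f m| = 0)
    (hnull : ∀ g ∈ I, Tendsto (fun n => g (f n)) atTop (𝓝 0)) :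
    ∀ g ∈ I, Tendsto (fun n => g |f n|) atTop (𝓝 0) := by
  intro g hg
  exact squeeze_zero_norm (fun n => abs_apply_le_absApp g (abs_nonneg (f n)))
    (tendsto_absApp_abs_of_forall_absLE g hdisj fun h hh => hnull h (hIdeal g hg h hh))
end

section
/- Let $X$ be a Banach lattice with the property that every norm bounded sequence in $X$ has a subsequence whose Cesàro sequence order converges in $X$ (the order Banach-Saks property). Then $X$ is sequentially monotonically complete: every norm bounded increasing sequence in $X_+$ has a supremum in $X$. -/
open Filter Topology

/-- Cesàro sequence of `f`: `m ↦ (1/(m+1)) ∑_{n=0}^{m} f n`. -/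
noncomputable def cesaro {X : Type*} [AddCommGroup X] [Module ℝ X] (f : ℕ → X) (m : ℕ) : X :=
  ((m : ℝ) + 1)⁻¹ • ∑ n ∈ Finset.range (m + 1), f n

/-- Order convergence of a sequence: there is a sequence decreasing (in order) to `0`
which eventually dominates `|g m - x|`. -/
def OrderConvergesTo {X : Type*} [Lattice X] [AddCommGroup X] (g : ℕ → X) (x : X) : Prop :=
  ∃ h : ℕ → X, Antitone h ∧ IsGLB (Set.range h) 0 ∧
    ∀ k : ℕ, ∃ N : ℕ, ∀ m ≥ N, |g m - x| ≤ h k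

/-! Let `x` be the order limit of the Cesàro means of a subsequence `g = f ∘ σ`. Every upper
bound of `f` bounds all Cesàro means, hence `x`. Conversely, for `m ≥ n` monotonicity gives
`g n ≤ cesaro g m + (m + 1)⁻¹ • ∑_{i < n} (g n - g i)`; the error term tends to `0` in norm and
the positive cone is closed, so `g n ≤ x`. The only analytic input beyond that is that real
scalars act monotonically, which follows from `2`-semiclosedness of lattice-ordered groups by
approximating with dyadic rationals. -/

section PosSMulMono

variable {X : Type*} [AddCommGroup X] [Lattice X] [IsOrderedAddMonoid X]

lemma nonneg_of_two_pow_nsmul_nonneg_s3 {a : X} (j : ℕ) (h : 0 ≤ 2 ^ j • a) : 0 ≤ a := by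
  induction j generalizing a with
  | zero => simpa using h
  | succ j ih => exact nsmul_two_semiclosed (ih (by rwa [← mul_nsmul', ← pow_succ]))

variable [Module ℝ X]

lemma dyadic_smul_nonneg {y : X} (hy : 0 ≤ y) (k j : ℕ) : 0 ≤ ((k : ℝ) / 2 ^ j) • y := by
  refine nonneg_of_two_pow_nsmul_nonneg_s3 j ?_
  rw [← Nat.cast_smul_eq_nsmul ℝ, smul_smul, Nat.cast_pow, Nat.cast_ofNat,
    mul_div_cancel₀ _ (by positivity), Nat.cast_smul_eq_nsmul]
  exact nsmul_nonneg hy k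

lemma posSMulMono_real_of_closedIciTopology [TopologicalSpace X] [ContinuousSMul ℝ X]
    [ClosedIciTopology X] : PosSMulMono ℝ X :=
  PosSMulMono.of_smul_nonneg fun _ hc y hy =>
    ge_of_tendsto (((tendsto_nat_floor_mul_div_atTop hc).comp
        (tendsto_pow_atTop_atTop_of_one_lt one_lt_two)).smul_const y)
      (Eventually.of_forall fun j => dyadic_smul_nonneg hy _ j)

end PosSMulMono

section Cesaro

variable {X : Type*} [AddCommGroup X] [Module ℝ X]

lemma sum_range_succ_const_eq_smul (b : X) (m : ℕ) :
    ∑ _i ∈ Finset.range (m + 1), b = ((m : ℝ) + 1) • b := by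
  rw [Finset.sum_const, Finset.card_range, ← Nat.cast_smul_eq_nsmul ℝ]
  push_cast
  rfl

lemma cesaro_sub_const (f : ℕ → X) (a : X) (m : ℕ) :
    cesaro (fun i => f i - a) m = cesaro f m - a := by
  rw [cesaro, cesaro, Finset.sum_sub_distrib, smul_sub, sum_range_succ_const_eq_smul, smul_smul,
    inv_mul_cancel₀ (by positivity), one_smul]

variable [PartialOrder X] [IsOrderedAddMonoid X] [PosSMulMono ℝ X]

lemma cesaro_le_of_forall_le {f : ℕ → X} {b : X} (h : ∀ n, f n ≤ b) (m : ℕ) :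
    cesaro f m ≤ b :=
  calc cesaro f m ≤ ((m : ℝ) + 1)⁻¹ • ∑ _i ∈ Finset.range (m + 1), b :=
        smul_le_smul_of_nonneg_left (Finset.sum_le_sum fun i _ => h i) (by positivity)
    _ = b := by
        rw [sum_range_succ_const_eq_smul, smul_smul, inv_mul_cancel₀ (by positivity), one_smul]

lemma Monotone.le_cesaro_add {g : ℕ → X} (hg : Monotone g) {n m : ℕ} (hnm : n ≤ m) :
    g n ≤ cesaro g m + ((m : ℝ) + 1)⁻¹ • ∑ i ∈ Finset.range n, (g n - g i) := by
  have hsum : ∑ i ∈ Finset.range n, (g i - g n) ≤ ∑ i ∈ Finset.range (m + 1), (g i - g n) :=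
    Finset.sum_le_sum_of_subset_of_nonneg (Finset.range_subset_range.2 (by omega))
      fun i _ hi => sub_nonneg.2 (hg (by simpa using hi))
  have hces : -(((m : ℝ) + 1)⁻¹ • ∑ i ∈ Finset.range n, (g n - g i)) ≤ cesaro g m - g n := by
    rw [← cesaro_sub_const, cesaro, ← smul_neg, ← Finset.sum_neg_distrib]
    simp only [neg_sub]
    exact smul_le_smul_of_nonneg_left hsum (by positivity)
  rwa [neg_le_sub_iff_le_add] at hces

end Cesaro

namespace OrderConvergesTo

variable {X : Type*} [Lattice X] [AddCommGroup X] [IsOrderedAddMonoid X] {g : ℕ → X} {x : X}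

lemma le_of_forall_le {b : X} (hx : OrderConvergesTo g x) (h : ∀ m, g m ≤ b) : x ≤ b := by
  obtain ⟨d, -, hd, hconv⟩ := hx
  refine sub_nonpos.1 (hd.2 ?_)
  rintro _ ⟨k, rfl⟩
  obtain ⟨N, hN⟩ := hconv k
  calc x - b ≤ x - g N := sub_le_sub_left (h N) x
    _ ≤ |g N - x| := abs_sub_comm (g N) x ▸ le_abs_self _
    _ ≤ d k := hN N le_rfl

lemma le_of_tendsto_of_le_add [TopologicalSpace X] [ClosedIciTopology X] {a : X} {t : ℕ → X}
    (hx : OrderConvergesTo g x) (ht : Tendsto t atTop (𝓝 0))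
    (h : ∀ᶠ m in atTop, a ≤ g m + t m) : a ≤ x := by
  obtain ⟨d, -, hd, hconv⟩ := hx
  refine sub_nonpos.1 (hd.2 ?_)
  rintro _ ⟨k, rfl⟩
  obtain ⟨N, hN⟩ := hconv k
  refine sub_nonpos.1 (ge_of_tendsto ht ?_)
  filter_upwards [h, eventually_ge_atTop N] with m ham hm
  have hgm : g m - x ≤ d k := (le_abs_self _).trans (hN m hm)
  calc a - x - d k ≤ (g m + t m) - x - (g m - x) := by gcongr
    _ = t m := by abel

end OrderConvergesTo

theorem stmt3_general {X : Type*} [NormedAddCommGroup X] [Lattice X] [IsOrderedAddMonoid X] [HasSolidNorm X] [NormedSpace ℝ X]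
    (hoBSP : ∀ f : ℕ → X, (∃ C : ℝ, ∀ n, ‖f n‖ ≤ C) →
      ∃ σ : ℕ → ℕ, StrictMono σ ∧ ∃ x : X, OrderConvergesTo (cesaro (f ∘ σ)) x)
    (f : ℕ → X) (hmono : Monotone f)
    (hbdd : ∃ C : ℝ, ∀ n, ‖f n‖ ≤ C) :
    ∃ x : X, IsLUB (Set.range f) x := by
  have : PosSMulMono ℝ X := posSMulMono_real_of_closedIciTopology
  obtain ⟨σ, hσ, x, hx⟩ := hoBSP f hbdd
  have hg : Monotone (f ∘ σ) := hmono.comp hσ.monotone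
  refine ⟨x, ?_, fun b hb => hx.le_of_forall_le (cesaro_le_of_forall_le fun i => hb ⟨σ i, rfl⟩)⟩
  rintro _ ⟨n, rfl⟩
  have herr : Tendsto (fun m : ℕ => ((m : ℝ) + 1)⁻¹ • ∑ i ∈ Finset.range n, (f (σ n) - f (σ i)))
      atTop (𝓝 0) := by
    simpa only [one_div, zero_smul] using (tendsto_one_div_add_atTop_nhds_zero_nat (𝕜 := ℝ)).smul_const
      (∑ i ∈ Finset.range n, (f (σ n) - f (σ i)))
  refine (hmono hσ.le_apply).trans (hx.le_of_tendsto_of_le_add herr ?_)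
  filter_upwards [eventually_ge_atTop n] with m hm
  exact hg.le_cesaro_add hm

/-- If every norm bounded sequence in the Banach lattice `X` has a subsequence whose Cesàro
sequence order converges (the order Banach–Saks property), then `X` is sequentially
monotonically complete: every norm bounded increasing sequence in `X₊` has a supremum. -/
theorem stmt3 {X : Type*} [NormedAddCommGroup X] [Lattice X] [IsOrderedAddMonoid X] [HasSolidNorm X] [NormedSpace ℝ X] [CompleteSpace X]
    (hoBSP : ∀ f : ℕ → X, (∃ C : ℝ, ∀ n, ‖f n‖ ≤ C) →
      ∃ σ : ℕ → ℕ, StrictMono σ ∧ ∃ x : X, OrderConvergesTo (cesaro (f ∘ σ)) x)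
    (f : ℕ → X) (hmono : Monotone f) (hpos : ∀ n, 0 ≤ f n)
    (hbdd : ∃ C : ℝ, ∀ n, ‖f n‖ ≤ C) :
    ∃ x : X, IsLUB (Set.range f) x :=
  stmt3_general hoBSP f hmono hbdd
end

section
/- Let $X$ be a Banach lattice that is $p$-convex for some $p > 1$, and let $\{f_n\}$ be a norm bounded disjoint sequence in $X$. Then the sequence of suprema $g_n := \bigvee_{k=1}^n \left|\frac{1}{k}\sum_{j=1}^k f_j\right| = \sum_{k=1}^n \frac{|f_k|}{k}$ is norm Cauchy; consequently the Cesàro sequence of $\{f_n\}$ is order bounded in $X$. -/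
/-!
Put `g k = (k + 1)⁻¹ • f k`. The `g k` are pairwise disjoint, so `p`-convexity bounds
`‖∑_{k ∈ s} |g k|‖ ^ p` by `M ^ p * ∑_{k ∈ s} ‖g k‖ ^ p ≤ (M * C) ^ p * ∑_{k ∈ s} (k + 1) ^ (-p)`, and
for `p > 1` the right-hand side is small on finite sets far out. Hence `∑ |g k|` converges in the
Banach lattice, and its sum dominates every `|cesaro f m| ≤ ∑_{k ≤ m} |f k| / (k + 1)`.
-/

open Filter Topology

section ClosedCone

variable {X : Type*} [AddCommGroup X] [Lattice X] [IsOrderedAddMonoid X] [Module ℝ X]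

lemma inv_two_pow_smul_nonneg {x : X} (hx : 0 ≤ x) (j : ℕ) : 0 ≤ ((2 : ℝ) ^ j)⁻¹ • x := by
  induction j with
  | zero => simpa using hx
  | succ j ih =>
    refine nsmul_two_semiclosed ?_
    rwa [← Nat.cast_smul_eq_nsmul ℝ, smul_smul, pow_succ, mul_inv, mul_left_comm, Nat.cast_two,
      mul_inv_cancel₀ two_ne_zero, mul_one]

variable [TopologicalSpace X] [ContinuousSMul ℝ X] [OrderClosedTopology X]

/-- `c • x` is the limit of the dyadic approximations `⌊2ⁿ c⌋₊ • (2ⁿ)⁻¹ • x`, which are positive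
since `0 ≤ 2 • y → 0 ≤ y` in a lattice-ordered group. -/
instance OrderClosedTopology.posSMulMono_real : PosSMulMono ℝ X := by
  refine PosSMulMono.of_smul_nonneg fun c hc x hx => ?_
  have hdyadic : Tendsto (fun n : ℕ => (⌊c * 2 ^ n⌋₊ : ℝ) / 2 ^ n) atTop (𝓝 c) :=
    (tendsto_nat_floor_mul_div_atTop hc).comp (tendsto_pow_atTop_atTop_of_one_lt one_lt_two)
  refine ge_of_tendsto (hdyadic.smul_const x) (Eventually.of_forall fun n => ?_)
  rw [div_eq_mul_inv, mul_smul, Nat.cast_smul_eq_nsmul]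
  exact nsmul_nonneg (inv_two_pow_smul_nonneg hx n) _

end ClosedCone

section LatticeModule

variable {X : Type*} [AddCommGroup X] [Lattice X] [IsOrderedAddMonoid X] [Module ℝ X]
  [PosSMulMono ℝ X]

lemma abs_smul_of_nonneg {c : ℝ} (hc : 0 ≤ c) (x : X) : |c • x| = c • |x| := by
  rcases hc.eq_or_lt with rfl | hc
  · simp
  · simp only [abs, ← smul_neg]
    exact ((OrderIso.smulRight hc).map_sup x (-x)).symm

lemma abs_cesaro_le (f : ℕ → X) (m : ℕ) :
    |cesaro f m| ≤ ∑ k ∈ Finset.range (m + 1), ((k : ℝ) + 1)⁻¹ • |f k| := by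
  have hm : (0 : ℝ) ≤ ((m : ℝ) + 1)⁻¹ := by positivity
  calc |cesaro f m| = ((m : ℝ) + 1)⁻¹ • |∑ k ∈ Finset.range (m + 1), f k| :=
        abs_smul_of_nonneg hm _
    _ ≤ ((m : ℝ) + 1)⁻¹ • ∑ k ∈ Finset.range (m + 1), |f k| :=
        smul_le_smul_of_nonneg_left
          (Finset.le_sum_of_subadditive _ abs_zero.le (abs_add_le (α := X)) _ _) hm
    _ = ∑ k ∈ Finset.range (m + 1), ((m : ℝ) + 1)⁻¹ • |f k| := Finset.smul_sum
    _ ≤ ∑ k ∈ Finset.range (m + 1), ((k : ℝ) + 1)⁻¹ • |f k| := by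
        gcongr with k hk
        exact_mod_cast Finset.mem_range_succ_iff.1 hk

end LatticeModule

lemma summable_of_norm_sum_rpow_le {ι E : Type*} [NormedAddCommGroup E] [CompleteSpace E]
    {p : ℝ} (hp : 0 < p) {f : ι → E} {b : ι → ℝ} (hb : Summable b)
    (hfb : ∀ s : Finset ι, ‖∑ i ∈ s, f i‖ ^ p ≤ ∑ i ∈ s, b i) : Summable f := by
  refine summable_iff_vanishing_norm.2 fun ε hε => ?_
  obtain ⟨s, hs⟩ := summable_iff_vanishing_norm.1 hb (ε ^ p) (by positivity)
  refine ⟨s, fun t ht => ?_⟩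
  have hlt : ‖∑ i ∈ t, f i‖ ^ p < ε ^ p :=
    (hfb t).trans_lt ((le_abs_self _).trans_lt (hs t ht))
  exact (Real.rpow_lt_rpow_iff (norm_nonneg _) hε.le hp).1 hlt

section UpperEstimate

variable {X : Type*} [NormedAddCommGroup X] [Lattice X] {p M : ℝ}

lemma norm_sum_abs_rpow_le {ι : Type*}
    (hpconv : ∀ (n : ℕ) (g : Fin n → X), (∀ i j, i ≠ j → |g i| ⊓ |g j| = 0) →
      ‖∑ i, |g i|‖ ≤ M * (∑ i, ‖g i‖ ^ p) ^ (1 / p))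
    (hp : 0 < p) (hM : 0 ≤ M) {g : ι → X}
    (hg : Pairwise fun i j => |g i| ⊓ |g j| = 0) (s : Finset ι) :
    ‖∑ i ∈ s, |g i|‖ ^ p ≤ ∑ i ∈ s, M ^ p * ‖g i‖ ^ p := by
  have hfin := hpconv s.card (fun i => g (s.equivFin.symm i))
    (fun i j hij => hg fun h => hij (s.equivFin.symm.injective (Subtype.ext h)))
  rw [s.equivFin.symm.sum_comp (fun i => |g i|), s.equivFin.symm.sum_comp (fun i => ‖g i‖ ^ p),
    Finset.sum_coe_sort s (fun i => |g i|), Finset.sum_coe_sort s (fun i => ‖g i‖ ^ p)] at hfin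
  have hnonneg : 0 ≤ ∑ i ∈ s, ‖g i‖ ^ p := by positivity
  calc ‖∑ i ∈ s, |g i|‖ ^ p ≤ (M * (∑ i ∈ s, ‖g i‖ ^ p) ^ (1 / p)) ^ p := by gcongr
    _ = ∑ i ∈ s, M ^ p * ‖g i‖ ^ p := by
      rw [Real.mul_rpow hM (by positivity), ← Real.rpow_mul hnonneg, one_div_mul_cancel hp.ne',
        Real.rpow_one, Finset.mul_sum]

lemma summable_abs_of_summable_norm_rpow [CompleteSpace X]
    (hpconv : ∀ (n : ℕ) (g : Fin n → X), (∀ i j, i ≠ j → |g i| ⊓ |g j| = 0) →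
      ‖∑ i, |g i|‖ ≤ M * (∑ i, ‖g i‖ ^ p) ^ (1 / p))
    (hp : 0 < p) (hM : 0 ≤ M)
    {ι : Type*} {g : ι → X} (hg : Pairwise fun i j => |g i| ⊓ |g j| = 0)
    (hgp : Summable fun i => ‖g i‖ ^ p) : Summable fun i => |g i| :=
  summable_of_norm_sum_rpow_le hp (hgp.mul_left (M ^ p)) (norm_sum_abs_rpow_le hpconv hp hM hg)

end UpperEstimate

lemma summable_norm_inv_succ_smul_rpow {E : Type*} [SeminormedAddCommGroup E] [NormedSpace ℝ E]
    {p : ℝ} (hp : 1 < p) {f : ℕ → E} {C : ℝ} (hf : ∀ k, ‖f k‖ ≤ C) :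
    Summable fun k : ℕ => ‖((k : ℝ) + 1)⁻¹ • f k‖ ^ p := by
  have hC : 0 ≤ C := (norm_nonneg _).trans (hf 0)
  have hpseries : Summable fun k : ℕ => (((k : ℝ) + 1) ^ p)⁻¹ := by
    simpa using (summable_nat_add_iff 1).2 (Real.summable_nat_rpow_inv.2 hp)
  refine (hpseries.mul_left (C ^ p)).of_nonneg_of_le (fun k => by positivity) fun k => ?_
  rw [norm_smul, Real.norm_of_nonneg (by positivity), ← Real.inv_rpow (by positivity),
    ← Real.mul_rpow hC (by positivity), mul_comm]
  gcongr
  exact hf k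

/-- Let `X` be a `p`-convex Banach lattice (`p > 1`); the `p`-convexity inequality is stated
for disjoint families, where the Krivine element `(∑ |g i|^p)^{1/p}` coincides with
`∑ |g i|`. Then for any norm bounded disjoint sequence `{f n}`, the sequence of suprema
`g_n = ⋁_{k=1}^n |(1/k)(f 1 + ⋯ + f k)| = ∑_{k=1}^n |f k|/k` is norm Cauchy;
consequently the Cesàro sequence of `{f n}` is order bounded in `X`. -/
theorem stmt4 {X : Type*} [NormedAddCommGroup X] [Lattice X] [IsOrderedAddMonoid X] [HasSolidNorm X] [NormedSpace ℝ X] [CompleteSpace X]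
    (p : ℝ) (hp : 1 < p) (M : ℝ) (hM : 0 < M)
    (hpconv : ∀ (n : ℕ) (g : Fin n → X), (∀ i j, i ≠ j → |g i| ⊓ |g j| = 0) →
      ‖∑ i, |g i|‖ ≤ M * (∑ i, ‖g i‖ ^ p) ^ (1 / p))
    (f : ℕ → X) (hdisj : ∀ n m, n ≠ m → |f n| ⊓ |f m| = 0)
    (C : ℝ) (hbdd : ∀ n, ‖f n‖ ≤ C) :
    CauchySeq (fun n => ∑ k ∈ Finset.range (n + 1), ((k : ℝ) + 1)⁻¹ • |f k|) ∧
      ∃ b : X, ∀ m, |cesaro f m| ≤ b := by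
  set g : ℕ → X := fun k => ((k : ℝ) + 1)⁻¹ • f k
  have habs (k : ℕ) : |g k| = ((k : ℝ) + 1)⁻¹ • |f k| := abs_smul_of_nonneg (by positivity) _
  have hle (k : ℕ) : |g k| ≤ |f k| :=
    (habs k).trans_le (smul_le_of_le_one_left (abs_nonneg _) (inv_le_one_of_one_le₀ (by simp)))
  have hgdisj : Pairwise fun i j => |g i| ⊓ |g j| = 0 := fun i j hij =>
    le_antisymm ((inf_le_inf (hle i) (hle j)).trans_eq (hdisj i j hij))
      (le_inf (abs_nonneg _) (abs_nonneg _))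
  have hsum : Summable fun k => |g k| := summable_abs_of_summable_norm_rpow hpconv
    (zero_lt_one.trans hp) hM.le hgdisj (summable_norm_inv_succ_smul_rpow hp hbdd)
  simp only [← habs]
  refine ⟨(hsum.hasSum.tendsto_sum_nat.comp (tendsto_add_atTop_nat 1)).cauchySeq,
    ∑' k, |g k|, fun m => ?_⟩
  calc |cesaro f m| ≤ ∑ k ∈ Finset.range (m + 1), |g k| := by
        simpa only [habs] using abs_cesaro_le f m
    _ ≤ ∑' k, |g k| := hsum.sum_le_tsum _ fun k _ => abs_nonneg _
end

section
/- Let $\{f_n\}$ be a sequence of measurable real-valued functions on a measure space and let $N \in \mathbb{N}$. Then the pointwise inequality $\frac{N}{2} \sup_{n \geq N} \left|\frac{f_1 + \dots + f_n}{n}\right| \leq \sum_{\ell=0}^{N-1} \sup_{m \geq 1} \left|\frac{f_\ell + f_{N+\ell} + \dots + f_{(m-1)N+\ell}}{m}\right|$ holds (where the suprema are taken pointwise in the lattice $L^0$). -/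
open Finset MeasureTheory

/-! Split `f 0 + ⋯ + f (n-1)` according to the residue `ℓ` of the index mod `N`. The class of `ℓ`
has `c_ℓ = ⌈(n - ℓ)/N⌉` elements and `N c_ℓ < n + N ≤ 2n` when `n ≥ N`, so
`(N/2n) |∑_{i<n} f i| ≤ ∑_ℓ (N/2n) |∑_{class ℓ} f i| ≤ ∑_ℓ |∑_{class ℓ} f i| / c_ℓ`, and each
summand is one of the averages whose supremum is taken on the right. -/

theorem Nat.mul_add_lt_iff_lt_ceilDiv {N ℓ n j : ℕ} (hN : 0 < N) :
    j * N + ℓ < n ↔ j < (n - ℓ) ⌈/⌉ N := by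
  rw [← not_le, ← not_le, ceilDiv_le_iff_le_mul hN, Nat.mul_comm]
  omega

theorem Nat.mul_ceilDiv_sub_le_two_mul {N ℓ n : ℕ} (hNn : N ≤ n) :
    N * ((n - ℓ) ⌈/⌉ N) ≤ 2 * n := by
  have := Nat.mul_div_le (n - ℓ + N - 1) N
  rw [ceilDiv_eq_add_pred_div]
  omega

theorem Finset.sum_range_eq_sum_residues {M : Type*} [AddCommMonoid M] (g : ℕ → M) {N : ℕ}
    (hN : 0 < N) (n : ℕ) :
    ∑ i ∈ range n, g i = ∑ ℓ ∈ range N, ∑ j ∈ range ((n - ℓ) ⌈/⌉ N), g (j * N + ℓ) := by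
  rw [sum_sigma']
  refine sum_nbij' (fun i ↦ ⟨i % N, i / N⟩) (fun p ↦ p.2 * N + p.1) ?_ ?_ ?_ ?_ ?_
  · intro i hi
    simp only [mem_range, mem_sigma] at hi ⊢
    refine ⟨Nat.mod_lt i hN, (Nat.mul_add_lt_iff_lt_ceilDiv hN).1 ?_⟩
    rwa [Nat.div_add_mod']
  · rintro ⟨ℓ, j⟩ hp
    simp only [mem_range, mem_sigma] at hp ⊢
    exact (Nat.mul_add_lt_iff_lt_ceilDiv hN).2 hp.2
  · intro i _
    exact Nat.div_add_mod' i N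
  · rintro ⟨ℓ, j⟩ hp
    simp only [mem_range, mem_sigma] at hp
    have hmod : (j * N + ℓ) % N = ℓ := by rw [Nat.mul_add_mod_self_right, Nat.mod_eq_of_lt hp.1]
    have hdiv : (j * N + ℓ) / N = j := by
      rw [Nat.add_comm, Nat.add_mul_div_right _ _ hN, Nat.div_eq_of_lt hp.1, Nat.zero_add]
    simp only [hmod, hdiv]
  · intro i _
    simp only [Nat.div_add_mod']

noncomputable def supAbsAverage (s : ℕ → ℝ) : ENNReal :=
  ⨆ m : ℕ, ENNReal.ofReal |(∑ j ∈ range (m + 1), s j) / ((m : ℝ) + 1)|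

theorem ofReal_mul_abs_sum_le_supAbsAverage (s : ℕ → ℝ) {a : ℝ} {c : ℕ}
    (hac : a * c ≤ 1) : ENNReal.ofReal (a * |∑ j ∈ range c, s j|) ≤ supAbsAverage s := by
  cases c with
  | zero => simp
  | succ m =>
    refine le_iSup_of_le m (ENNReal.ofReal_le_ofReal ?_)
    have hm : (0 : ℝ) < m + 1 := by positivity
    push_cast at hac
    rw [abs_div, abs_of_pos hm, le_div_iff₀ hm, mul_right_comm]
    exact mul_le_of_le_one_left (abs_nonneg _) hac

theorem stmt6_general {α : Type*}
    (f : ℕ → α → ℝ) (N : ℕ) (hN : 1 ≤ N) (x : α) :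
    (N : ENNReal) / 2 *
        ⨆ n : {k : ℕ // N ≤ k}, ENNReal.ofReal |(∑ i ∈ Finset.range (n : ℕ), f i x) / (n : ℕ)| ≤
      ∑ ℓ ∈ Finset.range N,
        ⨆ m : ℕ, ENNReal.ofReal
          |(∑ j ∈ Finset.range (m + 1), f (j * N + ℓ) x) / ((m : ℝ) + 1)| := by
  rw [ENNReal.mul_iSup]
  refine iSup_le fun ⟨n, hNn⟩ ↦ ?_
  have hn : (0 : ℝ) < n := by exact_mod_cast hN.trans hNn
  set a : ℝ := N / (2 * n)
  have ha : 0 ≤ a := by positivity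
  calc (N : ENNReal) / 2 * ENNReal.ofReal |(∑ i ∈ range n, f i x) / n|
      = ENNReal.ofReal (a * |∑ i ∈ range n, f i x|) := by
        rw [← ENNReal.ofReal_natCast, ← ENNReal.ofReal_ofNat 2, ← ENNReal.ofReal_div_of_pos two_pos,
          ← ENNReal.ofReal_mul (by positivity), abs_div, abs_of_pos hn]
        congr 1
        ring
    _ ≤ ENNReal.ofReal (∑ ℓ ∈ range N, a * |∑ j ∈ range ((n - ℓ) ⌈/⌉ N), f (j * N + ℓ) x|) := by
        rw [sum_range_eq_sum_residues _ hN, ← mul_sum]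
        exact ENNReal.ofReal_le_ofReal (mul_le_mul_of_nonneg_left (abs_sum_le_sum_abs _ _) ha)
    _ = ∑ ℓ ∈ range N, ENNReal.ofReal (a * |∑ j ∈ range ((n - ℓ) ⌈/⌉ N), f (j * N + ℓ) x|) :=
        ENNReal.ofReal_sum_of_nonneg fun ℓ _ ↦ by positivity
    _ ≤ ∑ ℓ ∈ range N, supAbsAverage fun j ↦ f (j * N + ℓ) x := by
        refine sum_le_sum fun ℓ _ ↦ ofReal_mul_abs_sum_le_supAbsAverage _ ?_
        rw [div_mul_eq_mul_div, div_le_one (by positivity)]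
        exact_mod_cast Nat.mul_ceilDiv_sub_le_two_mul hNn

/-- For a sequence of measurable functions `{f n}` on a measure space and `N ≥ 1`, the
pointwise inequality
`(N/2) ⋁_{n ≥ N} |(f 0 + ⋯ + f (n-1))/n| ≤ ∑_{ℓ=0}^{N-1} ⋁_{m ≥ 1} |(f ℓ + f (N+ℓ) + ⋯ + f ((m-1)N+ℓ))/m|`
holds, the (possibly infinite) suprema being computed in `ℝ≥0∞`. -/
theorem stmt6 {α : Type*} [MeasurableSpace α] (μ : Measure α)
    (f : ℕ → α → ℝ) (hf : ∀ n, Measurable (f n)) (N : ℕ) (hN : 1 ≤ N) (x : α) :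
    (N : ENNReal) / 2 *
        ⨆ n : {k : ℕ // N ≤ k}, ENNReal.ofReal |(∑ i ∈ Finset.range (n : ℕ), f i x) / (n : ℕ)| ≤
      ∑ ℓ ∈ Finset.range N,
        ⨆ m : ℕ, ENNReal.ofReal
          |(∑ j ∈ Finset.range (m + 1), f (j * N + ℓ) x) / ((m : ℝ) + 1)| :=
  stmt6_general f N hN x
end

section
/- Let $\varphi$ be an Orlicz function and $L^\varphi = L^\varphi[0,1]$ the associated Orlicz space with Luxemburg norm, with Orlicz heart $H^\varphi$. Let $\{f_n\}$ be a disjoint sequence in $H^\varphi$ such that for every subsequence $\{f_{n_k}\}$, the supremum $\bigvee_{k=1}^\infty \left|\frac{f_{n_1}+\dots+f_{n_k}}{k}\right|$ exists in $L^\varphi$ with uniformly bounded norm (at most $p$ for some fixed $p > 0$). Then $\bigvee_{n=1}^\infty \left|\frac{f_1+\dots+f_n}{n}\right| \in H^\varphi$; in particular, the Cesàro sequence of $\{f_n\}$ order converges to $0$ in $H^\varphi$. -/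
open Filter Topology MeasureTheory Set

noncomputable section

/-- Lebesgue measure on `(0,1]`, our model of the unit interval. -/
def mu : Measure ℝ := volume.restrict (Set.Ioc 0 1)

/-- `φ` is an Orlicz function: convex, increasing, non-constant, vanishing at `0`
(and nonnegative) on `[0,∞)`. -/
def IsOrlicz (φ : ℝ → ℝ) : Prop :=
  ConvexOn ℝ (Set.Ici 0) φ ∧ MonotoneOn φ (Set.Ici 0) ∧ φ 0 = 0 ∧
    (∀ t, 0 ≤ φ t) ∧ ∃ t, 0 < t ∧ 0 < φ t

/-- Membership in the Orlicz space `L^φ[0,1]`: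
`∫_0^1 φ(|f|/c) ≤ 1` for some `c > 0`. -/
def MemLphi (φ : ℝ → ℝ) (f : ℝ → ℝ) : Prop :=
  AEStronglyMeasurable f mu ∧ ∃ c : ℝ, 0 < c ∧
    IntegrableOn (fun s => φ (|f s| / c)) (Set.Ioc 0 1) ∧
    ∫ s in Set.Ioc (0:ℝ) 1, φ (|f s| / c) ≤ 1

/-- Membership in the Orlicz heart `H^φ`: `f ∈ L^φ` and `∫_0^1 φ(|f|/c) < ∞` for all `c > 0`. -/
def MemHphi (φ : ℝ → ℝ) (f : ℝ → ℝ) : Prop :=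
  MemLphi φ f ∧ ∀ c : ℝ, 0 < c → IntegrableOn (fun s => φ (|f s| / c)) (Set.Ioc 0 1)

/-- The Luxemburg norm on `L^φ[0,1]`. -/
def luxNorm (φ : ℝ → ℝ) (f : ℝ → ℝ) : ℝ :=
  sInf {c : ℝ | 0 < c ∧ IntegrableOn (fun s => φ (|f s| / c)) (Set.Ioc 0 1) ∧
    ∫ s in Set.Ioc (0:ℝ) 1, φ (|f s| / c) ≤ 1}

/-- The conjugate Orlicz function `φ*(s) = sup { s t - φ t : t ≥ 0 }`. -/
def conjOrlicz (φ : ℝ → ℝ) (s : ℝ) : ℝ :=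
  sSup ((fun t => s * t - φ t) '' Set.Ici 0)

/-- The conjugate `φ*` is finite-valued. -/
def ConjFinite (φ : ℝ → ℝ) : Prop :=
  ∀ s : ℝ, 0 ≤ s → BddAbove ((fun t => s * t - φ t) '' Set.Ici 0)

/-- The `Δ₂`-condition: `ψ(2t) ≤ C ψ(t)` for all large `t`. -/
def Delta2 (ψ : ℝ → ℝ) : Prop :=
  ∃ C : ℝ, 0 < C ∧ ∃ t0 : ℝ, 0 < t0 ∧ ∀ t, t0 < t → ψ (2 * t) ≤ C * ψ t

/-- Cesàro sequence of a sequence of functions. -/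
def cesaroF (f : ℕ → ℝ → ℝ) (n : ℕ) (s : ℝ) : ℝ :=
  (∑ i ∈ Finset.range (n + 1), f i s) / ((n : ℝ) + 1)

/-- Order convergence in `L^φ` of a sequence of functions to a limit: dominated a.e.
convergence, the dominating function lying in `L^φ`. -/
def OrderConvLphi (φ : ℝ → ℝ) (g : ℕ → ℝ → ℝ) (l : ℝ → ℝ) : Prop :=
  MemLphi φ l ∧ ∃ h : ℝ → ℝ, MemLphi φ h ∧
    (∀ n, ∀ᵐ s ∂mu, |g n s - l s| ≤ h s) ∧
    (∀ᵐ s ∂mu, Tendsto (fun n => g n s) atTop (𝓝 (l s)))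

/-- The decreasing rearrangement of `f` (as a function on `(0,1]`). -/
def decRe (f : ℝ → ℝ) (t : ℝ) : ℝ :=
  sInf {l : ℝ | 0 ≤ l ∧ mu {x | l < |f x|} ≤ ENNReal.ofReal t}

/-
By disjointness, at almost every `s` at most one `f n₀ s` is nonzero, and then
`G s = ⋁ₙ |cesaroF f n s| = |f n₀ s| / (n₀ + 1)`. Given `c > 0`, choose `N` with `p < c N / 2`.
Indices `n₀ < N` are controlled by `f n₀ ∈ H^φ`. An index `n₀ = m N + ℓ` with `m ≥ 1` is the
`m`-th term of the progression `ℓ, N + ℓ, 2N + ℓ, …`, whose Cesàro supremum `g_ℓ` is therefore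
at least `|f n₀ s| / (m + 1)`; since `c' (m + 1) ≤ c N m ≤ c (n₀ + 1)` for any `c' ≤ c N / 2`,
the integrand `φ (|f n₀ s| / ((n₀ + 1) c))` is at most `φ (g_ℓ s / c')`, which is integrable
for some such `c'` because `‖g_ℓ‖_φ ≤ p`. So `φ (G / c)` is dominated by a finite sum of
integrable functions.
-/

open Finset

section SingleSupport

variable {f : ℕ → ℝ → ℝ} {s : ℝ} {n₀ : ℕ}

theorem cesaroF_eq_of_forall_ne (h : ∀ m ≠ n₀, f m s = 0) (n : ℕ) :
    cesaroF f n s = if n₀ ≤ n then f n₀ s / (n + 1) else 0 := by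
  unfold cesaroF
  split_ifs with hle
  · rw [sum_eq_single_of_mem n₀ (mem_range.2 (Nat.lt_succ_of_le hle)) fun m _ hm => h m hm]
  · rw [sum_eq_zero fun m hm => h m (by have := mem_range.1 hm; omega), zero_div]

theorem abs_cesaroF_self_of_forall_ne (h : ∀ m ≠ n₀, f m s = 0) :
    |cesaroF f n₀ s| = |f n₀ s| / (n₀ + 1) := by
  rw [cesaroF_eq_of_forall_ne h, if_pos le_rfl, abs_div,
    abs_of_pos (by positivity : (0 : ℝ) < n₀ + 1)]

theorem abs_cesaroF_le_of_forall_ne (h : ∀ m ≠ n₀, f m s = 0) (n : ℕ) :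
    |cesaroF f n s| ≤ |f n₀ s| / (n₀ + 1) := by
  rw [cesaroF_eq_of_forall_ne h]
  split_ifs with hle
  · rw [abs_div, abs_of_pos (by positivity : (0 : ℝ) < n + 1)]
    gcongr
  · rw [abs_zero]
    positivity

theorem bddAbove_abs_cesaroF_of_forall_ne (h : ∀ m ≠ n₀, f m s = 0) :
    BddAbove (range fun n => |cesaroF f n s|) :=
  ⟨_, forall_mem_range.2 (abs_cesaroF_le_of_forall_ne h)⟩

theorem iSup_abs_cesaroF_of_forall_ne (h : ∀ m ≠ n₀, f m s = 0) :
    ⨆ n, |cesaroF f n s| = |f n₀ s| / (n₀ + 1) :=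
  le_antisymm (ciSup_le (abs_cesaroF_le_of_forall_ne h))
    ((abs_cesaroF_self_of_forall_ne h).symm.le.trans
      (le_ciSup (bddAbove_abs_cesaroF_of_forall_ne h) n₀))

theorem tendsto_cesaroF_of_forall_ne (h : ∀ m ≠ n₀, f m s = 0) :
    Tendsto (fun n => cesaroF f n s) atTop (𝓝 0) := by
  have hlim : Tendsto (fun n : ℕ => f n₀ s / ((n : ℝ) + 1)) atTop (𝓝 0) :=
    tendsto_const_nhds.div_atTop (tendsto_natCast_atTop_atTop.atTop_add tendsto_const_nhds)
  refine hlim.congr' ?_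
  filter_upwards [eventually_ge_atTop n₀] with n hn
  rw [cesaroF_eq_of_forall_ne h, if_pos hn]

theorem abs_cesaroF_comp_of_forall_ne {σ : ℕ → ℕ} (hσ : σ.Injective) {m : ℕ} (hm : σ m = n₀)
    (h : ∀ k ≠ n₀, f k s = 0) : |cesaroF (f ∘ σ) m s| = |f n₀ s| / (m + 1) := by
  have h' : ∀ k ≠ m, (f ∘ σ) k s = 0 := fun k hk => h _ (hm ▸ hσ.ne hk)
  rw [abs_cesaroF_self_of_forall_ne h', Function.comp_apply, hm]

end SingleSupport

theorem exists_forall_ne_eq_zero_of_min_abs {a : ℕ → ℝ}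
    (h : ∀ n m, n ≠ m → min |a n| |a m| = 0) : ∃ n₀, ∀ m ≠ n₀, a m = 0 := by
  by_cases hz : ∀ n, a n = 0
  · exact ⟨0, fun m _ => hz m⟩
  push Not at hz
  obtain ⟨n₀, hn₀⟩ := hz
  refine ⟨n₀, fun m hm => ?_⟩
  have hmin := h n₀ m hm.symm
  rcases min_choice |a n₀| |a m| with h₁ | h₁ <;> rw [h₁, abs_eq_zero] at hmin
  exacts [absurd hmin hn₀, hmin]

theorem ae_exists_forall_ne_eq_zero {μ : Measure ℝ} {f : ℕ → ℝ → ℝ}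
    (hdisj : ∀ n m, n ≠ m → ∀ᵐ s ∂μ, min |f n s| |f m s| = 0) :
    ∀ᵐ s ∂μ, ∃ n₀, ∀ m ≠ n₀, f m s = 0 := by
  have hall : ∀ᵐ s ∂μ, ∀ n m, n ≠ m → min |f n s| |f m s| = 0 :=
    ae_all_iff.2 fun n => ae_all_iff.2 fun m =>
      if hnm : n = m then .of_forall fun _ h => absurd hnm h
      else (hdisj n m hnm).mono fun _ hs _ => hs
  exact hall.mono fun s hs => exists_forall_ne_eq_zero_of_min_abs hs

theorem aemeasurable_cesaroF {μ : Measure ℝ} {f : ℕ → ℝ → ℝ}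
    (hf : ∀ n, AEMeasurable (f n) μ) (n : ℕ) : AEMeasurable (cesaroF f n) μ :=
  (Finset.aemeasurable_fun_sum _ fun i _ => hf i).div_const _

theorem MonotoneOn.aestronglyMeasurable_comp {φ : ℝ → ℝ} (hφ : MonotoneOn φ (Ici 0))
    {α : Type*} [MeasurableSpace α] {μ : Measure α} {u : α → ℝ} (hu : AEMeasurable u μ)
    (hu0 : ∀ s, 0 ≤ u s) : AEStronglyMeasurable (fun s => φ (u s)) μ := by
  have hmono : Monotone fun t => φ (max t 0) := fun a b hab =>
    hφ (le_max_right a 0) (le_max_right b 0) (max_le_max hab le_rfl)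
  have heq : (fun s => φ (u s)) = fun s => φ (max (u s) 0) :=
    funext fun s => by rw [max_eq_left (hu0 s)]
  rw [heq]
  exact (hmono.measurable.comp_aemeasurable hu).aestronglyMeasurable

theorem exists_lt_of_luxNorm_lt {φ g : ℝ → ℝ} (hg : MemLphi φ g) {c : ℝ} (hc : luxNorm φ g < c) :
    ∃ c', 0 < c' ∧ c' < c ∧ IntegrableOn (fun s => φ (|g s| / c')) (Ioc 0 1) := by
  obtain ⟨c', ⟨hc'0, hint, -⟩, hlt⟩ := exists_lt_of_csInf_lt hg.2 hc
  exact ⟨c', hc'0, hlt, hint⟩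

theorem MemLphi.mono {φ : ℝ → ℝ} (hmono : MonotoneOn φ (Ici 0)) (hnn : ∀ t, 0 ≤ φ t)
    {g G : ℝ → ℝ} (hg : MemLphi φ g) (hG : AEStronglyMeasurable G mu)
    (hle : ∀ᵐ s ∂mu, |G s| ≤ |g s|) : MemLphi φ G := by
  obtain ⟨-, c, hc, hint, hle1⟩ := hg
  have hφle : ∀ᵐ s ∂mu, φ (|G s| / c) ≤ φ (|g s| / c) :=
    hle.mono fun s hs => hmono (Set.mem_Ici.2 (by positivity)) (Set.mem_Ici.2 (by positivity))
      (by gcongr)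
  have hintG : IntegrableOn (fun s => φ (|G s| / c)) (Ioc 0 1) :=
    hint.mono' (hmono.aestronglyMeasurable_comp (hG.aemeasurable.abs.div_const c)
      fun s => by positivity) (hφle.mono fun s hs => by rwa [Real.norm_of_nonneg (hnn _)])
  exact ⟨hG, c, hc, hintG, (integral_mono_ae hintG hint hφle).trans hle1⟩

theorem div_mul_le_div_of_progression {a b c c' : ℝ} {N m ℓ : ℕ} (ha : 0 ≤ a) (hm : 1 ≤ m)
    (hc : 0 < c) (hc' : 0 < c') (hc'N : c' ≤ c * N / 2) (hab : a / (m + 1) ≤ b) :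
    a / ((↑(m * N + ℓ) + 1) * c) ≤ b / c' := by
  have hm' : (1 : ℝ) ≤ m := by exact_mod_cast hm
  have hden : c' * (m + 1) ≤ ((↑(m * N + ℓ) : ℝ) + 1) * c := by
    have h₁ : c' * (m + 1) ≤ c * N / 2 * (m + 1) := by gcongr
    have h₂ : (0 : ℝ) ≤ c * N := by positivity
    push_cast
    nlinarith [mul_nonneg hc.le (Nat.cast_nonneg ℓ : (0 : ℝ) ≤ ℓ)]
  calc a / ((↑(m * N + ℓ) + 1) * c) ≤ a / (c' * (m + 1)) :=
        div_le_div_of_nonneg_left ha (by positivity) hden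
    _ = a / (m + 1) / c' := by rw [div_div, mul_comm]
    _ ≤ b / c' := by gcongr

theorem apply_div_le_sum_of_forall_ne {φ : ℝ → ℝ} (hmono : MonotoneOn φ (Ici 0))
    (hnn : ∀ t, 0 ≤ φ t) {f g : ℕ → ℝ → ℝ} {s c : ℝ} {N n₀ : ℕ} {c' : ℕ → ℝ} (hc : 0 < c)
    (hN : 0 < N) (hc'0 : ∀ ℓ, 0 < c' ℓ) (hc'N : ∀ ℓ, c' ℓ ≤ c * N / 2)
    (h : ∀ m ≠ n₀, f m s = 0) (hdom : ∀ ℓ k, |cesaroF (f ∘ (· * N + ℓ)) k s| ≤ g ℓ s) :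
    φ (|f n₀ s| / ((n₀ + 1) * c)) ≤
      ∑ n ∈ range N, φ (|f n s| / ((n + 1) * c)) + ∑ ℓ ∈ range N, φ (|g ℓ s| / c' ℓ) := by
  have hsum₁ := sum_nonneg fun n (_ : n ∈ range N) => hnn (|f n s| / ((n + 1) * c))
  have hsum₂ := sum_nonneg fun ℓ (_ : ℓ ∈ range N) => hnn (|g ℓ s| / c' ℓ)
  rcases lt_or_ge n₀ N with hn₀ | hn₀
  · have := single_le_sum (fun n _ => hnn (|f n s| / ((n + 1) * c))) (mem_range.2 hn₀)
    linarith
  obtain ⟨m, ℓ, hm, hℓ, rfl⟩ : ∃ m ℓ, 1 ≤ m ∧ ℓ < N ∧ n₀ = m * N + ℓ :=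
    ⟨n₀ / N, n₀ % N, Nat.div_pos hn₀ hN, Nat.mod_lt _ hN, (Nat.div_add_mod' n₀ N).symm⟩
  have hσ : Function.Injective (· * N + ℓ) := fun a b hab =>
    Nat.eq_of_mul_eq_mul_right hN (Nat.add_right_cancel hab)
  have hgm : |f (m * N + ℓ) s| / (m + 1) ≤ g ℓ s :=
    abs_cesaroF_comp_of_forall_ne hσ rfl h ▸ hdom ℓ m
  have hg0 : 0 ≤ g ℓ s := (abs_nonneg _).trans (hdom ℓ m)
  have hφ : φ (|f (m * N + ℓ) s| / ((↑(m * N + ℓ) + 1) * c)) ≤ φ (|g ℓ s| / c' ℓ) := by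
    refine hmono (Set.mem_Ici.2 (by positivity))
      (Set.mem_Ici.2 (div_nonneg (abs_nonneg _) (hc'0 ℓ).le)) ?_
    rw [abs_of_nonneg hg0]
    exact div_mul_le_div_of_progression (abs_nonneg _) hm hc (hc'0 ℓ) (hc'N ℓ) hgm
  have := single_le_sum (fun ℓ _ => hnn (|g ℓ s| / c' ℓ)) (mem_range.2 hℓ)
  linarith

theorem integrableOn_apply_iSup_abs_cesaroF_div {φ : ℝ → ℝ} (hmono : MonotoneOn φ (Ici 0))
    (hnn : ∀ t, 0 ≤ φ t) {f : ℕ → ℝ → ℝ} {p : ℝ} (hf : ∀ n, AEMeasurable (f n) mu)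
    (hmem : ∀ n c, 0 < c → IntegrableOn (fun s => φ (|f n s| / c)) (Ioc 0 1))
    (hsingle : ∀ᵐ s ∂mu, ∃ n₀, ∀ m ≠ n₀, f m s = 0)
    (hsub : ∀ σ : ℕ → ℕ, StrictMono σ → ∃ g : ℝ → ℝ, MemLphi φ g ∧ luxNorm φ g ≤ p ∧
      ∀ k, ∀ᵐ s ∂mu, |cesaroF (f ∘ σ) k s| ≤ g s) {c : ℝ} (hc : 0 < c) :
    IntegrableOn (fun s => φ (|(⨆ n, |cesaroF f n s|)| / c)) (Ioc 0 1) := by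
  obtain ⟨N, hN, hpN⟩ : ∃ N : ℕ, 0 < N ∧ p < c * N / 2 := by
    obtain ⟨N, hN⟩ := exists_nat_gt (2 * p / c)
    refine ⟨N + 1, N.succ_pos, ?_⟩
    rw [div_lt_iff₀ hc] at hN
    push_cast
    linarith
  choose g hgL hgp hgdom using fun ℓ =>
    hsub (· * N + ℓ) fun a b hab => Nat.add_lt_add_right (Nat.mul_lt_mul_of_pos_right hab hN) ℓ
  choose c' hc'0 hc'lt hc'int using fun ℓ =>
    exists_lt_of_luxNorm_lt (hgL ℓ) ((hgp ℓ).trans_lt hpN)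
  have hF : IntegrableOn (fun s => ∑ n ∈ range N, φ (|f n s| / ((n + 1) * c)) +
      ∑ ℓ ∈ range N, φ (|g ℓ s| / c' ℓ)) (Ioc 0 1) :=
    (integrable_finsetSum _ fun n _ => hmem n _ (by positivity)).add
      (integrable_finsetSum _ fun ℓ _ => hc'int ℓ)
  have hG : AEMeasurable (fun s => ⨆ n, |cesaroF f n s|) mu :=
    AEMeasurable.iSup fun n => (aemeasurable_cesaroF hf n).abs
  refine hF.mono' (hmono.aestronglyMeasurable_comp (hG.abs.div_const c) fun s => by positivity) ?_
  filter_upwards [hsingle, ae_all_iff.2 fun ℓ => ae_all_iff.2 (hgdom ℓ)] with s ⟨n₀, h⟩ hdom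
  rw [Real.norm_of_nonneg (hnn _), iSup_abs_cesaroF_of_forall_ne h, abs_of_nonneg (by positivity),
    div_div]
  exact apply_div_le_sum_of_forall_ne hmono hnn hc hN hc'0 (fun ℓ => (hc'lt ℓ).le) h hdom

theorem stmt7_general (φ : ℝ → ℝ) (hφ : IsOrlicz φ) (p : ℝ)
    (f : ℕ → ℝ → ℝ) (hmem : ∀ n, MemHphi φ (f n))
    (hdisj : ∀ n m, n ≠ m → ∀ᵐ s ∂mu, min |f n s| |f m s| = 0)
    (hsub : ∀ σ : ℕ → ℕ, StrictMono σ → ∃ g : ℝ → ℝ, MemLphi φ g ∧ luxNorm φ g ≤ p ∧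
      (∀ k, ∀ᵐ s ∂mu, |cesaroF (f ∘ σ) k s| ≤ g s) ∧
      (∀ g' : ℝ → ℝ, MemLphi φ g' → (∀ k, ∀ᵐ s ∂mu, |cesaroF (f ∘ σ) k s| ≤ g' s) →
        ∀ᵐ s ∂mu, g s ≤ g' s)) :
    ∃ G : ℝ → ℝ, MemHphi φ G ∧
      (∀ᵐ s ∂mu, BddAbove (Set.range fun n => |cesaroF f n s|)) ∧
      (∀ᵐ s ∂mu, G s = ⨆ n, |cesaroF f n s|) ∧
      (∀ᵐ s ∂mu, Tendsto (fun n => cesaroF f n s) atTop (𝓝 0)) := by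
  obtain ⟨-, hmono, -, hnn, -⟩ := hφ
  have hf : ∀ n, AEMeasurable (f n) mu := fun n => (hmem n).1.1.aemeasurable
  have hsingle := ae_exists_forall_ne_eq_zero hdisj
  have hG : AEStronglyMeasurable (fun s => ⨆ n, |cesaroF f n s|) mu :=
    (AEMeasurable.iSup fun n => (aemeasurable_cesaroF hf n).abs)
      |>.aestronglyMeasurable
  obtain ⟨g, hg, -, hgdom, -⟩ := hsub id strictMono_id
  have hGg : ∀ᵐ s ∂mu, |(⨆ n, |cesaroF f n s|)| ≤ |g s| := by
    filter_upwards [ae_all_iff.2 hgdom] with s hs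
    rw [abs_of_nonneg (Real.iSup_nonneg fun _ => abs_nonneg _)]
    exact (ciSup_le hs).trans (le_abs_self _)
  refine ⟨_, ⟨hg.mono hmono hnn hG hGg, fun c hc =>
    integrableOn_apply_iSup_abs_cesaroF_div hmono hnn hf (fun n => (hmem n).2) hsingle
      (fun σ hσ => (hsub σ hσ).imp fun _ hg => ⟨hg.1, hg.2.1, hg.2.2.1⟩) hc⟩,
    ?_, .of_forall fun _ => rfl, ?_⟩
  · filter_upwards [hsingle] with s ⟨n₀, h⟩ using bddAbove_abs_cesaroF_of_forall_ne h
  · filter_upwards [hsingle] with s ⟨n₀, h⟩ using tendsto_cesaroF_of_forall_ne h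

/-- If `{f n}` is a disjoint sequence in `H^φ` such that for every subsequence the supremum
of the absolute Cesàro averages exists in `L^φ` with Luxemburg norm at most `p`, then the
supremum `⋁_n |(f 0 + ⋯ + f n)/(n+1)|` belongs to `H^φ`; in particular the Cesàro sequence
of `{f n}` order converges to `0` in `H^φ`. -/
theorem stmt7 (φ : ℝ → ℝ) (hφ : IsOrlicz φ) (p : ℝ) (hp : 0 < p)
    (f : ℕ → ℝ → ℝ) (hmem : ∀ n, MemHphi φ (f n))
    (hdisj : ∀ n m, n ≠ m → ∀ᵐ s ∂mu, min |f n s| |f m s| = 0)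
    (hsub : ∀ σ : ℕ → ℕ, StrictMono σ → ∃ g : ℝ → ℝ, MemLphi φ g ∧ luxNorm φ g ≤ p ∧
      (∀ k, ∀ᵐ s ∂mu, |cesaroF (f ∘ σ) k s| ≤ g s) ∧
      (∀ g' : ℝ → ℝ, MemLphi φ g' → (∀ k, ∀ᵐ s ∂mu, |cesaroF (f ∘ σ) k s| ≤ g' s) →
        ∀ᵐ s ∂mu, g s ≤ g' s)) :
    ∃ G : ℝ → ℝ, MemHphi φ G ∧
      (∀ᵐ s ∂mu, BddAbove (Set.range fun n => |cesaroF f n s|)) ∧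
      (∀ᵐ s ∂mu, G s = ⨆ n, |cesaroF f n s|) ∧
      (∀ᵐ s ∂mu, Tendsto (fun n => cesaroF f n s) atTop (𝓝 0)) :=
  stmt7_general φ hφ p f hmem hdisj hsub
end
end

section
/- Let $\varphi$ be an Orlicz function with finite conjugate $\varphi^*$, and let $f_n = \sum_{t\in F_n} t\chi_{A_t}$ be as built from an eligible sequence $\mathcal{F}$ with $|A_t| = w_t/\varphi(t)$ and the $A_t$ pairwise disjoint. If $\lim_{m,n\to\infty} b_{n,m}(\mathcal{F}) = 0$, where $b_{n,m}(\mathcal{F}) = \sum_{t\in F_n} w_t \frac{m\varphi(t/m)}{\varphi(t)}$, then $\{f_n\}$ is weakly null in $L^\varphi$. -/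
open Filter Topology MeasureTheory Set

noncomputable section

/-! The argument stays with the Luxemburg norm instead of passing to the dual `L^{φ*}`.
Fix `ε > 0` and `N` with `b_{n,m} < ε` for `n, m ≥ N`. For a finite set `S` of indices `≥ N`
and signs `σ_n = ±1`, the `A_t` are disjoint, so the modular of `(∑_{n ∈ S} σ_n f_n) / m` is
`∑_{n ∈ S} b_{n,m} / m < ε |S| / m`; with `m ≈ N + ε |S|` this gives
`‖∑_{n ∈ S} σ_n f_n‖ ≤ N + ε |S| + 2`. Taking `σ_n` the sign of `G f_n`, a bounded functional
satisfies `∑_{n ∈ S} |G f_n| ≤ K (N + 2) + K ε |S|` for every such `S`, which is incompatible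
with `|G f_n| ≥ ε₀` for infinitely many `n` once `ε < ε₀ / K`. -/

section DisjointIndicatorSum

variable {α ι : Type*} {T : Finset ι} {B : ι → Set α}

lemma comp_sum_mul_indicator (hB : (T : Set ι).PairwiseDisjoint B) (c : ι → ℝ)
    {g : ℝ → ℝ} (hg : g 0 = 0) (s : α) :
    g (∑ i ∈ T, c i * (B i).indicator 1 s) = ∑ i ∈ T, g (c i) * (B i).indicator 1 s := by
  classical
  by_cases hs : ∃ i ∈ T, s ∈ B i
  · obtain ⟨i, hi, hsi⟩ := hs
    have hzero : ∀ j ∈ T, j ≠ i → (B j).indicator (1 : α → ℝ) s = 0 := fun j hj hji =>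
      indicator_of_notMem (fun hsj => disjoint_left.mp (hB hj hi hji) hsj hsi) _
    rw [Finset.sum_eq_single_of_mem i hi (fun j hj hji => by rw [hzero j hj hji, mul_zero]),
      Finset.sum_eq_single_of_mem i hi (fun j hj hji => by rw [hzero j hj hji, mul_zero])]
    simp [indicator_of_mem hsi]
  · simp only [not_exists, not_and] at hs
    rw [Finset.sum_eq_zero fun i hi => by rw [indicator_of_notMem (hs i hi), mul_zero],
      Finset.sum_eq_zero fun i hi => by rw [indicator_of_notMem (hs i hi), mul_zero], hg]

variable [MeasurableSpace α] {μ : Measure α}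

lemma integrable_comp_sum_mul_indicator (hB : (T : Set ι).PairwiseDisjoint B)
    (hBm : ∀ i ∈ T, MeasurableSet (B i)) (hBfin : ∀ i ∈ T, μ (B i) ≠ ⊤) (c : ι → ℝ)
    {g : ℝ → ℝ} (hg : g 0 = 0) :
    Integrable (fun s => g (∑ i ∈ T, c i * (B i).indicator 1 s)) μ := by
  simp_rw [comp_sum_mul_indicator hB c hg]
  exact integrable_finsetSum T fun i hi =>
    ((integrable_indicator_iff (hBm i hi)).mpr (integrableOn_const (hBfin i hi))).const_mul _

lemma integral_comp_sum_mul_indicator (hB : (T : Set ι).PairwiseDisjoint B)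
    (hBm : ∀ i ∈ T, MeasurableSet (B i)) (hBfin : ∀ i ∈ T, μ (B i) ≠ ⊤) (c : ι → ℝ)
    {g : ℝ → ℝ} (hg : g 0 = 0) :
    ∫ s, g (∑ i ∈ T, c i * (B i).indicator 1 s) ∂μ = ∑ i ∈ T, g (c i) * μ.real (B i) := by
  simp_rw [comp_sum_mul_indicator hB c hg]
  rw [integral_finsetSum T fun i hi =>
    ((integrable_indicator_iff (hBm i hi)).mpr (integrableOn_const (hBfin i hi))).const_mul _]
  exact Finset.sum_congr rfl fun i hi => by rw [integral_const_mul, integral_indicator_one (hBm i hi)]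

end DisjointIndicatorSum

section OrderedFinsets

variable {α : Type*} [Preorder α] {F : ℕ → Finset α}

lemma lt_of_mem_of_mem_of_lt (hFne : ∀ n, (F n).Nonempty)
    (hFsep : ∀ n, ∀ t ∈ F n, ∀ t' ∈ F (n + 1), t < t') {n n' : ℕ} (hn : n < n')
    {t t' : α} (ht : t ∈ F n) (ht' : t' ∈ F n') : t < t' := by
  induction n', hn using Nat.le_induction generalizing t' with
  | base => exact hFsep n t ht t' ht'
  | succ k _ ih =>
    obtain ⟨u, hu⟩ := hFne k
    exact (ih hu).trans (hFsep k u hu t' ht')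

lemma eq_of_mem_of_mem (hFne : ∀ n, (F n).Nonempty)
    (hFsep : ∀ n, ∀ t ∈ F n, ∀ t' ∈ F (n + 1), t < t') {n n' : ℕ} {t : α}
    (ht : t ∈ F n) (ht' : t ∈ F n') : n = n' := by
  by_contra hne
  rcases Nat.lt_or_gt_of_ne hne with h | h
  · exact lt_irrefl t (lt_of_mem_of_mem_of_lt hFne hFsep h ht ht')
  · exact lt_irrefl t (lt_of_mem_of_mem_of_lt hFne hFsep h ht' ht)

end OrderedFinsets

lemma tendsto_zero_of_sum_abs_le (a : ℕ → ℝ)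
    (ha : ∀ ε > 0, ∃ N : ℕ, ∃ C : ℝ, ∀ S : Finset ℕ, (∀ n ∈ S, N ≤ n) →
      ∑ n ∈ S, |a n| ≤ C + ε * S.card) :
    Tendsto a atTop (𝓝 0) := by
  rw [Metric.tendsto_atTop]
  by_contra! hbad
  obtain ⟨ε, hε, hfreq⟩ := hbad
  obtain ⟨N, C, hC⟩ := ha (ε / 2) (half_pos hε)
  have hinf : {n | N ≤ n ∧ ε ≤ |a n|}.Infinite := by
    refine Nat.frequently_atTop_iff_infinite.mp (frequently_atTop.mpr fun M => ?_)
    obtain ⟨n, hn, hεn⟩ := hfreq (max M N)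
    exact ⟨n, le_of_max_le_left hn, le_of_max_le_right hn, by simpa [Real.dist_eq] using hεn⟩
  obtain ⟨k, hk⟩ := exists_nat_gt (2 * C / ε)
  obtain ⟨S, hSsub, hScard⟩ := hinf.exists_subset_card_eq k
  have hlower : k * ε ≤ ∑ n ∈ S, |a n| := by
    simpa [hScard] using Finset.card_nsmul_le_sum S (fun n => |a n|) ε fun n hn => (hSsub hn).2
  have hupper := hC S fun n hn => (hSsub hn).1
  rw [hScard] at hupper
  rw [div_lt_iff₀ hε] at hk
  linarith

instance : IsFiniteMeasure mu := isFiniteMeasure_restrict.mpr measure_Ioc_lt_top.ne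

lemma luxNorm_nonneg (φ h : ℝ → ℝ) : 0 ≤ luxNorm φ h :=
  Real.sInf_nonneg fun _ hc => hc.1.le

lemma luxNorm_le {φ h : ℝ → ℝ} {c : ℝ} (hc : 0 < c)
    (hint : IntegrableOn (fun s => φ (|h s| / c)) (Ioc 0 1))
    (hle : ∫ s in Ioc (0:ℝ) 1, φ (|h s| / c) ≤ 1) : luxNorm φ h ≤ c :=
  csInf_le ⟨0, fun _ hx => hx.1.le⟩ ⟨hc, hint, hle⟩

section SignedSum

variable {F : ℕ → Finset ℝ} {A : ℝ → Set ℝ} {f : ℕ → ℝ → ℝ}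

lemma pairwiseDisjoint_sigma (hFne : ∀ n, (F n).Nonempty)
    (hFsep : ∀ n, ∀ t ∈ F n, ∀ t' ∈ F (n + 1), t < t')
    (hAdisj : ∀ t t', t ≠ t' → (∃ n, t ∈ F n) → (∃ n, t' ∈ F n) → Disjoint (A t) (A t'))
    (S : Finset ℕ) :
    (↑(S.sigma F) : Set ((_ : ℕ) × ℝ)).PairwiseDisjoint fun p => A p.2 := by
  intro p hp q hq hpq
  obtain ⟨-, hp⟩ := Finset.mem_sigma.mp hp
  obtain ⟨-, hq⟩ := Finset.mem_sigma.mp hq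
  refine hAdisj _ _ (fun heq => hpq ?_) ⟨_, hp⟩ ⟨_, hq⟩
  exact Sigma.ext (eq_of_mem_of_mem hFne hFsep hp (heq ▸ hq)) (heq_of_eq heq)

lemma smul_sum_apply_eq_sum_sigma (hf : ∀ n, f n = fun s => ∑ t ∈ F n, t * (A t).indicator 1 s)
    (S : Finset ℕ) (σ : ℕ → ℝ) (s : ℝ) :
    (∑ n ∈ S, σ n • f n) s = ∑ p ∈ S.sigma F, σ p.1 * p.2 * (A p.2).indicator 1 s := by
  simp only [Finset.sum_apply, Pi.smul_apply, smul_eq_mul, hf, Finset.sum_sigma, Finset.mul_sum,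
    mul_assoc]

lemma integrableOn_phi_smul_sum {φ : ℝ → ℝ} (hφ0 : φ 0 = 0) (hFne : ∀ n, (F n).Nonempty)
    (hFsep : ∀ n, ∀ t ∈ F n, ∀ t' ∈ F (n + 1), t < t')
    (hAmeas : ∀ t, (∃ n, t ∈ F n) → MeasurableSet (A t))
    (hAdisj : ∀ t t', t ≠ t' → (∃ n, t ∈ F n) → (∃ n, t' ∈ F n) → Disjoint (A t) (A t'))
    (hf : ∀ n, f n = fun s => ∑ t ∈ F n, t * (A t).indicator 1 s)
    (S : Finset ℕ) (σ : ℕ → ℝ) (c : ℝ) :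
    IntegrableOn (fun s => φ (|(∑ n ∈ S, σ n • f n) s| / c)) (Ioc 0 1) := by
  simp_rw [smul_sum_apply_eq_sum_sigma hf]
  exact integrable_comp_sum_mul_indicator (μ := mu) (pairwiseDisjoint_sigma hFne hFsep hAdisj S)
    (fun p hp => hAmeas _ ⟨p.1, (Finset.mem_sigma.mp hp).2⟩) (fun _ _ => measure_ne_top _ _) _
    (g := fun x => φ (|x| / c)) (by simpa using hφ0)

lemma integral_phi_smul_sum {φ : ℝ → ℝ} (hφ0 : φ 0 = 0) (hφnn : ∀ t, 0 ≤ φ t) {w : ℝ → ℝ}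
    (hFne : ∀ n, (F n).Nonempty) (hFpos : ∀ n, ∀ t ∈ F n, 0 < t)
    (hFsep : ∀ n, ∀ t ∈ F n, ∀ t' ∈ F (n + 1), t < t') (hwpos : ∀ n, ∀ t ∈ F n, 0 < w t)
    (hAmeas : ∀ t, (∃ n, t ∈ F n) → MeasurableSet (A t))
    (hAsub : ∀ t, (∃ n, t ∈ F n) → A t ⊆ Ioc 0 1)
    (hAdisj : ∀ t t', t ≠ t' → (∃ n, t ∈ F n) → (∃ n, t' ∈ F n) → Disjoint (A t) (A t'))
    (hAvol : ∀ n, ∀ t ∈ F n, volume (A t) = ENNReal.ofReal (w t / φ t))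
    (hf : ∀ n, f n = fun s => ∑ t ∈ F n, t * (A t).indicator 1 s)
    (S : Finset ℕ) {σ : ℕ → ℝ} (hσ : ∀ n, |σ n| = 1) (c : ℝ) :
    ∫ s in Ioc (0:ℝ) 1, φ (|(∑ n ∈ S, σ n • f n) s| / c) =
      ∑ n ∈ S, ∑ t ∈ F n, φ (t / c) * (w t / φ t) := by
  simp_rw [smul_sum_apply_eq_sum_sigma hf]
  rw [← mu, integral_comp_sum_mul_indicator (pairwiseDisjoint_sigma hFne hFsep hAdisj S)
    (fun p hp => hAmeas _ ⟨p.1, (Finset.mem_sigma.mp hp).2⟩) (fun _ _ => measure_ne_top _ _) _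
    (g := fun x => φ (|x| / c)) (by simpa using hφ0), Finset.sum_sigma]
  refine Finset.sum_congr rfl fun n _ => Finset.sum_congr rfl fun t ht => ?_
  have htF : ∃ n, t ∈ F n := ⟨n, ht⟩
  rw [abs_mul, hσ, one_mul, abs_of_pos (hFpos n t ht), measureReal_def, mu,
    Measure.restrict_apply (hAmeas t htF), inter_eq_self_of_subset_left (hAsub t htF),
    hAvol n t ht, ENNReal.toReal_ofReal (div_nonneg (hwpos n t ht).le (hφnn t))]

end SignedSum

lemma memLphi_smul_sum_and_luxNorm_le {φ : ℝ → ℝ} (hφ0 : φ 0 = 0) (hφnn : ∀ t, 0 ≤ φ t)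
    {F : ℕ → Finset ℝ} {w : ℝ → ℝ} {A : ℝ → Set ℝ} {f : ℕ → ℝ → ℝ}
    (hFne : ∀ n, (F n).Nonempty) (hFpos : ∀ n, ∀ t ∈ F n, 0 < t)
    (hFsep : ∀ n, ∀ t ∈ F n, ∀ t' ∈ F (n + 1), t < t') (hwpos : ∀ n, ∀ t ∈ F n, 0 < w t)
    (hAmeas : ∀ t, (∃ n, t ∈ F n) → MeasurableSet (A t))
    (hAsub : ∀ t, (∃ n, t ∈ F n) → A t ⊆ Ioc 0 1)
    (hAdisj : ∀ t t', t ≠ t' → (∃ n, t ∈ F n) → (∃ n, t' ∈ F n) → Disjoint (A t) (A t'))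
    (hAvol : ∀ n, ∀ t ∈ F n, volume (A t) = ENNReal.ofReal (w t / φ t))
    (hf : ∀ n, f n = fun s => ∑ t ∈ F n, t * (A t).indicator 1 s) {N : ℕ} {ε : ℝ}
    (hbN : ∀ n ≥ N, ∀ m ≥ N, ∑ t ∈ F n, w t * ((m : ℝ) * φ (t / m) / φ t) < ε)
    {S : Finset ℕ} (hS : ∀ n ∈ S, N ≤ n) {σ : ℕ → ℝ} (hσ : ∀ n, |σ n| = 1)
    {m : ℕ} (hmN : N ≤ m) (hm0 : 0 < m) (hSm : ε * S.card ≤ m) :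
    MemLphi φ (∑ n ∈ S, σ n • f n) ∧ luxNorm φ (∑ n ∈ S, σ n • f n) ≤ m := by
  have hm : (0 : ℝ) < m := by exact_mod_cast hm0
  have hmod : ∫ s in Ioc (0:ℝ) 1, φ (|(∑ n ∈ S, σ n • f n) s| / m) ≤ 1 := by
    rw [integral_phi_smul_sum hφ0 hφnn hFne hFpos hFsep hwpos hAmeas hAsub hAdisj hAvol hf S hσ]
    calc ∑ n ∈ S, ∑ t ∈ F n, φ (t / m) * (w t / φ t)
        = ∑ n ∈ S, (∑ t ∈ F n, w t * (m * φ (t / m) / φ t)) / m := by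
          refine Finset.sum_congr rfl fun n _ => ?_
          rw [Finset.sum_div]
          exact Finset.sum_congr rfl fun t _ => by field_simp
      _ ≤ ∑ _n ∈ S, ε / m :=
          Finset.sum_le_sum fun n hn => div_le_div_of_nonneg_right (hbN n (hS n hn) m hmN).le hm.le
      _ = ε * S.card / m := by rw [Finset.sum_const, nsmul_eq_mul]; ring
      _ ≤ 1 := (div_le_one hm).mpr hSm
  have hint := integrableOn_phi_smul_sum (φ := φ) hφ0 hFne hFsep hAmeas hAdisj hf S σ m
  have hfmeas : ∀ n, Measurable (f n) := fun n => hf n ▸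
    Finset.measurable_sum _ fun t ht => (measurable_one.indicator (hAmeas t ⟨n, ht⟩)).const_mul t
  have hmeas : Measurable (∑ n ∈ S, σ n • f n) := by
    rw [Finset.sum_fn]
    exact Finset.measurable_sum S fun n _ => (hfmeas n).const_smul (σ n)
  exact ⟨⟨hmeas.aestronglyMeasurable, m, hm, hint, hmod⟩, luxNorm_le hm hint hmod⟩

theorem stmt15_general (φ : ℝ → ℝ) (hφ : IsOrlicz φ)
    (F : ℕ → Finset ℝ) (w : ℝ → ℝ)
    (hFne : ∀ n, (F n).Nonempty)
    (hFpos : ∀ n, ∀ t ∈ F n, 0 < t)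
    (hFsep : ∀ n, ∀ t ∈ F n, ∀ t' ∈ F (n + 1), t < t')
    (hwpos : ∀ n, ∀ t ∈ F n, 0 < w t)
    (A : ℝ → Set ℝ)
    (hAmeas : ∀ t, (∃ n, t ∈ F n) → MeasurableSet (A t))
    (hAsub : ∀ t, (∃ n, t ∈ F n) → A t ⊆ Set.Ioc 0 1)
    (hAdisj : ∀ t t', t ≠ t' → (∃ n, t ∈ F n) → (∃ n, t' ∈ F n) → Disjoint (A t) (A t'))
    (hAvol : ∀ n, ∀ t ∈ F n, volume (A t) = ENNReal.ofReal (w t / φ t))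
    (f : ℕ → ℝ → ℝ) (hf : ∀ n, f n = fun s => ∑ t ∈ F n, t * (A t).indicator 1 s)
    (hb : ∀ ε : ℝ, 0 < ε → ∃ N : ℕ, ∀ n ≥ N, ∀ m ≥ N,
      (∑ t ∈ F n, w t * ((m : ℝ) * φ (t / m) / φ t)) < ε) :
    ∀ G : (ℝ → ℝ) →ₗ[ℝ] ℝ,
      (∃ K : ℝ, ∀ h : ℝ → ℝ, MemLphi φ h → |G h| ≤ K * luxNorm φ h) →
      Tendsto (fun n => G (f n)) atTop (𝓝 0) := by
  obtain ⟨-, -, hφ0, hφnn, -⟩ := hφ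
  rintro G ⟨K, hK⟩
  set K' := max K 1
  have hK' : 0 < K' := lt_max_of_lt_right one_pos
  have hsign : ∀ n, ∃ σ : ℝ, |σ| = 1 ∧ σ * G (f n) = |G (f n)| := fun n => by
    rcases le_total 0 (G (f n)) with h | h
    exacts [⟨1, by simp, by simp [abs_of_nonneg h]⟩, ⟨-1, by simp, by simp [abs_of_nonpos h]⟩]
  choose σ hσ hσG using hsign
  refine tendsto_zero_of_sum_abs_le _ fun ε hε => ?_
  obtain ⟨N, hN⟩ := hb (ε / K') (by positivity)
  refine ⟨N, K' * (N + 2), fun S hS => ?_⟩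
  set m := N + ⌈ε / K' * S.card⌉₊ + 1
  have hceil := Nat.le_ceil (ε / K' * S.card)
  have hm : (m : ℝ) ≤ N + ε / K' * S.card + 2 := by
    have := Nat.ceil_lt_add_one (R := ℝ) (a := ε / K' * S.card) (by positivity)
    push_cast [m]
    linarith
  obtain ⟨hmem, hlux⟩ := memLphi_smul_sum_and_luxNorm_le hφ0 hφnn hFne hFpos hFsep hwpos hAmeas
    hAsub hAdisj hAvol hf hN hS hσ (m := m) (by omega) (by omega) (by push_cast [m]; linarith)
  calc ∑ n ∈ S, |G (f n)| = G (∑ n ∈ S, σ n • f n) := by simp [map_sum, hσG]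
    _ ≤ K' * luxNorm φ (∑ n ∈ S, σ n • f n) := (le_abs_self _).trans <|
        (hK _ hmem).trans (mul_le_mul_of_nonneg_right (le_max_left _ _) (luxNorm_nonneg _ _))
    _ ≤ K' * (N + ε / K' * S.card + 2) := by gcongr; exact hlux.trans hm
    _ = K' * (N + 2) + ε * S.card := by field_simp; ring

/-- Given an eligible sequence `F, w`, disjoint measurable sets `A t ⊆ (0,1]` of measure
`w t / φ t`, and `f n = ∑_{t ∈ F n} t · χ_{A t}`, if
`b_{n,m} = ∑_{t ∈ F n} w t · m φ(t/m)/φ(t) → 0` as `n, m → ∞`, then `{f n}` is weakly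
null in `L^φ`. -/
theorem stmt15 (φ : ℝ → ℝ) (hφ : IsOrlicz φ) (hfin : ConjFinite φ)
    (F : ℕ → Finset ℝ) (w : ℝ → ℝ)
    (hFne : ∀ n, (F n).Nonempty)
    (hFpos : ∀ n, ∀ t ∈ F n, 0 < t)
    (hFsep : ∀ n, ∀ t ∈ F n, ∀ t' ∈ F (n + 1), t < t')
    (hFinfty : Tendsto (fun n => (F n).min' (hFne n)) atTop atTop)
    (hwpos : ∀ n, ∀ t ∈ F n, 0 < w t) (hw1 : ∀ n, ∑ t ∈ F n, w t = 1)
    (A : ℝ → Set ℝ)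
    (hAmeas : ∀ t, (∃ n, t ∈ F n) → MeasurableSet (A t))
    (hAsub : ∀ t, (∃ n, t ∈ F n) → A t ⊆ Set.Ioc 0 1)
    (hAdisj : ∀ t t', t ≠ t' → (∃ n, t ∈ F n) → (∃ n, t' ∈ F n) → Disjoint (A t) (A t'))
    (hAvol : ∀ n, ∀ t ∈ F n, volume (A t) = ENNReal.ofReal (w t / φ t))
    (f : ℕ → ℝ → ℝ) (hf : ∀ n, f n = fun s => ∑ t ∈ F n, t * (A t).indicator 1 s)
    (hb : ∀ ε : ℝ, 0 < ε → ∃ N : ℕ, ∀ n ≥ N, ∀ m ≥ N,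
      (∑ t ∈ F n, w t * ((m : ℝ) * φ (t / m) / φ t)) < ε) :
    ∀ G : (ℝ → ℝ) →ₗ[ℝ] ℝ,
      (∃ K : ℝ, ∀ h : ℝ → ℝ, MemLphi φ h → |G h| ≤ K * luxNorm φ h) →
      Tendsto (fun n => G (f n)) atTop (𝓝 0) :=
  stmt15_general φ hφ F w hFne hFpos hFsep hwpos A hAmeas hAsub hAdisj hAvol f hf hb
end
end
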